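/- arXiv:2505.07758 — 15 statements merged into one kernel-verified Lean document; each statement's English description precedes it below -/
import Mathlib

section
/- Suppose a finite simple graph G admits a (2k+1)-neighborhood balanced coloring σ. Then for any two distinct colors i and j, the number of edges whose endpoints have colors i and j equals 2|E(G)|/(2k+1)², and for any color i, the number of edges with both endpoints of color i equals |E(G)|/(2k+1)². -/
/-- A `(2k+1)`-neighborhood balanced coloring: every vertex has an equal number of
neighbors of each of the `2k+1` colors. -/
def NBColoring {V : Type*} (G : SimpleGraph V) (k : ℕ) (c : V → Fin (2*k+1)) : Prop :=
  ∀ v : V, ∀ i j : Fin (2*k+1),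
    Nat.card {u : V // G.Adj v u ∧ c u = i} = Nat.card {u : V // G.Adj v u ∧ c u = j}

open Finset

theorem stmt1 {V : Type*} [Fintype V] (G : SimpleGraph V) (k : ℕ) (hk : 1 ≤ k)
    (c : V → Fin (2*k+1)) (h : NBColoring G k c) :
    (∀ i j : Fin (2*k+1), i ≠ j →
      (2*k+1)^2 * Nat.card {e : Sym2 V // e ∈ G.edgeSet ∧
        ∃ u w : V, e = s(u, w) ∧ c u = i ∧ c w = j} = 2 * Nat.card G.edgeSet) ∧
    (∀ i : Fin (2*k+1),
      (2*k+1)^2 * Nat.card {e : Sym2 V // e ∈ G.edgeSet ∧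
        ∃ u w : V, e = s(u, w) ∧ c u = i ∧ c w = i} = Nat.card G.edgeSet) := by
  classical
  -- ordered adjacent pairs with prescribed colors
  set P : Fin (2*k+1) → Fin (2*k+1) → Finset (V × V) := fun i j =>
    univ.filter fun p => G.Adj p.1 p.2 ∧ c p.1 = i ∧ c p.2 = j with hP
  -- edges with prescribed colors
  set E : Fin (2*k+1) → Fin (2*k+1) → Finset (Sym2 V) := fun i j =>
    univ.filter fun e => e ∈ G.edgeSet ∧ ∃ u w : V, e = s(u, w) ∧ c u = i ∧ c w = j with hE
  -- all ordered adjacent pairs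
  set A : Finset (V × V) := univ.filter fun p => G.Adj p.1 p.2 with hA
  -- the coloring hypothesis, finset form
  have hN : ∀ (v : V) (i j : Fin (2*k+1)),
      (univ.filter fun u => G.Adj v u ∧ c u = i).card
        = (univ.filter fun u => G.Adj v u ∧ c u = j).card := by
    intro v i j
    have := h v i j
    simpa [Nat.card_eq_fintype_card, Fintype.card_subtype] using this
  -- fibers of `Prod.fst` on `P i j`
  have hfib : ∀ (i j : Fin (2*k+1)) (v : V),
      ((P i j).filter fun p => p.1 = v).card
        = if c v = i then (univ.filter fun u => G.Adj v u ∧ c u = j).card else 0 := by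
    intro i j v
    by_cases hc : c v = i
    · rw [if_pos hc]
      have himg : ((P i j).filter fun p => p.1 = v)
          = (univ.filter fun u => G.Adj v u ∧ c u = j).image fun u => (v, u) := by
        ext ⟨a, b⟩
        simp only [hP, mem_filter, mem_univ, true_and, mem_image, Prod.mk.injEq]
        constructor
        · rintro ⟨⟨hadj, hci, hcj⟩, rfl⟩
          exact ⟨b, ⟨hadj, hcj⟩, rfl, rfl⟩
        · rintro ⟨u, ⟨hadj, hcj⟩, rfl, rfl⟩
          exact ⟨⟨hadj, hc, hcj⟩, rfl⟩
      rw [himg, card_image_of_injective]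
      intro a b hab
      simpa using hab
    · rw [if_neg hc]
      rw [Finset.card_eq_zero, Finset.filter_eq_empty_iff]
      rintro ⟨a, b⟩ hm rfl
      simp only [hP, mem_filter] at hm
      exact hc hm.2.2.1
  -- P i j expressed as a sum over vertices of color i
  have hPval : ∀ i j : Fin (2*k+1), (P i j).card
      = ∑ v ∈ univ.filter (fun v => c v = i),
          (univ.filter fun u => G.Adj v u ∧ c u = j).card := by
    intro i j
    rw [Finset.card_eq_sum_card_fiberwise (f := Prod.fst) (t := univ)
      (fun x _ => mem_univ _)]
    calc ∑ v : V, ((P i j).filter fun p => p.1 = v).card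
        = ∑ v : V, if c v = i then (univ.filter fun u => G.Adj v u ∧ c u = j).card else 0 :=
          Finset.sum_congr rfl fun v _ => hfib i j v
      _ = _ := (Finset.sum_filter _ _).symm
  -- P i j is independent of j
  have hPA : ∀ i j j' : Fin (2*k+1), (P i j).card = (P i j').card := by
    intro i j j'
    rw [hPval, hPval]
    exact Finset.sum_congr rfl fun v _ => hN v j j'
  -- row sums
  have hrow : ∀ i j : Fin (2*k+1),
      (univ.filter fun p : V × V => G.Adj p.1 p.2 ∧ c p.1 = i).card
        = (2*k+1) * (P i j).card := by
    intro i j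
    rw [Finset.card_eq_sum_card_fiberwise (f := fun p => c p.2) (t := univ)
      (fun x _ => mem_univ _)]
    have : ∀ j' : Fin (2*k+1),
        ((univ.filter fun p : V × V => G.Adj p.1 p.2 ∧ c p.1 = i).filter
          fun p => c p.2 = j') = P i j' := by
      intro j'
      ext p
      simp only [hP, mem_filter, mem_univ, true_and]
      tauto
    calc ∑ j' : Fin (2*k+1), ((univ.filter fun p : V × V =>
            G.Adj p.1 p.2 ∧ c p.1 = i).filter fun p => c p.2 = j').card
        = ∑ _j' : Fin (2*k+1), (P i j).card := by
          refine Finset.sum_congr rfl fun j' _ => ?_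
          rw [this j']
          exact hPA i j' j
      _ = (2*k+1) * (P i j).card := by
          rw [Finset.sum_const, Finset.card_univ, Fintype.card_fin, smul_eq_mul]
  -- swapping coordinates
  have hswap : ∀ i : Fin (2*k+1),
      (univ.filter fun p : V × V => G.Adj p.1 p.2 ∧ c p.1 = i).card
        = (univ.filter fun p : V × V => G.Adj p.1 p.2 ∧ c p.2 = i).card := by
    intro i
    have himg : (univ.filter fun p : V × V => G.Adj p.1 p.2 ∧ c p.2 = i)
        = (univ.filter fun p : V × V => G.Adj p.1 p.2 ∧ c p.1 = i).image Prod.swap := by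
      ext ⟨a, b⟩
      simp only [mem_filter, mem_univ, true_and, mem_image, Prod.exists, Prod.swap_prod_mk,
        Prod.mk.injEq]
      constructor
      · rintro ⟨hadj, hci⟩
        exact ⟨b, a, ⟨hadj.symm, hci⟩, rfl, rfl⟩
      · rintro ⟨x, y, ⟨hadj, hci⟩, rfl, rfl⟩
        exact ⟨hadj.symm, hci⟩
    rw [himg, card_image_of_injective _ Prod.swap_injective]
  -- column sums
  have hcol : ∀ j : Fin (2*k+1),
      (univ.filter fun p : V × V => G.Adj p.1 p.2 ∧ c p.2 = j).card
        = ∑ i : Fin (2*k+1), (P i j).card := by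
    intro j
    rw [Finset.card_eq_sum_card_fiberwise (f := fun p => c p.1) (t := univ)
      (fun x _ => mem_univ _)]
    refine Finset.sum_congr rfl fun i _ => ?_
    congr 1
    ext p
    simp only [hP, mem_filter, mem_univ, true_and]
    tauto
  -- column sums are independent of the column
  have hcolconst : ∀ j j' : Fin (2*k+1),
      (univ.filter fun p : V × V => G.Adj p.1 p.2 ∧ c p.2 = j).card
        = (univ.filter fun p : V × V => G.Adj p.1 p.2 ∧ c p.2 = j').card := by
    intro j j'
    rw [hcol, hcol]
    exact Finset.sum_congr rfl fun i _ => hPA i j j'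
  -- rows are all equal
  have hrowconst : ∀ i i' : Fin (2*k+1),
      (univ.filter fun p : V × V => G.Adj p.1 p.2 ∧ c p.1 = i).card
        = (univ.filter fun p : V × V => G.Adj p.1 p.2 ∧ c p.1 = i').card := by
    intro i i'
    rw [hswap i, hswap i', hcolconst i i']
  -- total count of adjacent pairs
  have hAsum : ∀ i j : Fin (2*k+1), A.card = (2*k+1)^2 * (P i j).card := by
    intro i j
    have h1 : A.card = ∑ i' : Fin (2*k+1),
        (univ.filter fun p : V × V => G.Adj p.1 p.2 ∧ c p.1 = i').card := by
      rw [hA, Finset.card_eq_sum_card_fiberwise (f := fun p => c p.1) (t := univ)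
        (fun x _ => mem_univ _)]
      refine Finset.sum_congr rfl fun i' _ => ?_
      congr 1
      ext p
      simp only [mem_filter, mem_univ, true_and]
    rw [h1]
    calc ∑ i' : Fin (2*k+1),
          (univ.filter fun p : V × V => G.Adj p.1 p.2 ∧ c p.1 = i').card
        = ∑ _i' : Fin (2*k+1), ((2*k+1) * (P i j).card) := by
          refine Finset.sum_congr rfl fun i' _ => ?_
          rw [hrowconst i' i, hrow i j]
      _ = (2*k+1)^2 * (P i j).card := by
          rw [Finset.sum_const, Finset.card_univ, Fintype.card_fin, smul_eq_mul]
          ring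
  -- A.card = 2 * #edges
  have hA2 : A.card = 2 * G.edgeFinset.card := by
    have h1 : A.card = ∑ v : V, G.degree v := by
      rw [hA, Finset.card_eq_sum_card_fiberwise (f := Prod.fst) (t := univ)
        (fun x _ => mem_univ _)]
      refine Finset.sum_congr rfl fun v _ => ?_
      have himg : ((univ.filter fun p : V × V => G.Adj p.1 p.2).filter fun p => p.1 = v)
          = (G.neighborFinset v).image fun u => (v, u) := by
        ext ⟨a, b⟩
        simp only [mem_filter, mem_univ, true_and, mem_image, SimpleGraph.mem_neighborFinset,
          Prod.mk.injEq]
        constructor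
        · rintro ⟨hadj, rfl⟩
          exact ⟨b, hadj, rfl, rfl⟩
        · rintro ⟨u, hadj, rfl, rfl⟩
          exact ⟨hadj, rfl⟩
      rw [himg, card_image_of_injective]
      · rfl
      · intro a b hab
        simpa using hab
    rw [h1, SimpleGraph.sum_degrees_eq_twice_card_edges]
  -- relating P and E
  have hPE : ∀ i j : Fin (2*k+1), i ≠ j → (P i j).card = (E i j).card := by
    intro i j hij
    rw [Finset.card_eq_sum_card_fiberwise (f := fun p => s(p.1, p.2)) (t := E i j)]
    · calc ∑ e ∈ E i j, ((P i j).filter fun p => s(p.1, p.2) = e).card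
          = ∑ _e ∈ E i j, 1 := by
            refine Finset.sum_congr rfl fun e he => ?_
            simp only [hE, mem_filter, mem_univ, true_and] at he
            obtain ⟨hes, u, w, rfl, hcu, hcw⟩ := he
            have hadj : G.Adj u w := G.mem_edgeSet.mp hes
            have hfilter : ((P i j).filter fun p => s(p.1, p.2) = s(u, w)) = {(u, w)} := by
              ext ⟨a, b⟩
              simp only [hP, mem_filter, mem_univ, true_and, mem_singleton, Prod.mk.injEq,
                Sym2.eq_iff]
              constructor
              · rintro ⟨⟨hab, hca, hcb⟩, (⟨rfl, rfl⟩ | ⟨rfl, rfl⟩)⟩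
                · exact ⟨rfl, rfl⟩
                · exact absurd (hca ▸ hcw ▸ rfl) hij
              · rintro ⟨rfl, rfl⟩
                exact ⟨⟨hadj, hcu, hcw⟩, Or.inl ⟨rfl, rfl⟩⟩
            rw [hfilter, Finset.card_singleton]
        _ = (E i j).card := by simp
    · rintro ⟨a, b⟩ hp
      replace hp : (a, b) ∈ P i j := hp
      simp only [hP, mem_filter, mem_univ, true_and] at hp
      obtain ⟨hadj, hca, hcb⟩ := hp
      simp only [hE, mem_coe, mem_filter, mem_univ, true_and]
      exact ⟨G.mem_edgeSet.mpr hadj, a, b, rfl, hca, hcb⟩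
  have hPE2 : ∀ i : Fin (2*k+1), (P i i).card = 2 * (E i i).card := by
    intro i
    rw [Finset.card_eq_sum_card_fiberwise (f := fun p => s(p.1, p.2)) (t := E i i)]
    · calc ∑ e ∈ E i i, ((P i i).filter fun p => s(p.1, p.2) = e).card
          = ∑ _e ∈ E i i, 2 := by
            refine Finset.sum_congr rfl fun e he => ?_
            simp only [hE, mem_filter, mem_univ, true_and] at he
            obtain ⟨hes, u, w, rfl, hcu, hcw⟩ := he
            have hadj : G.Adj u w := G.mem_edgeSet.mp hes
            have hne : u ≠ w := hadj.ne
            have hfilter : ((P i i).filter fun p => s(p.1, p.2) = s(u, w))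
                = {(u, w), (w, u)} := by
              ext ⟨a, b⟩
              simp only [hP, mem_filter, mem_univ, true_and, mem_insert, mem_singleton,
                Prod.mk.injEq, Sym2.eq_iff]
              constructor
              · rintro ⟨⟨hab, hca, hcb⟩, (⟨rfl, rfl⟩ | ⟨rfl, rfl⟩)⟩
                · exact Or.inl ⟨rfl, rfl⟩
                · exact Or.inr ⟨rfl, rfl⟩
              · rintro (⟨rfl, rfl⟩ | ⟨rfl, rfl⟩)
                · exact ⟨⟨hadj, hcu, hcw⟩, Or.inl ⟨rfl, rfl⟩⟩
                · exact ⟨⟨hadj.symm, hcw, hcu⟩, Or.inr ⟨rfl, rfl⟩⟩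
            rw [hfilter, Finset.card_pair]
            intro hcontra
            exact hne (by simpa using congrArg Prod.fst hcontra)
        _ = 2 * (E i i).card := by rw [Finset.sum_const, smul_eq_mul, mul_comm]
    · rintro ⟨a, b⟩ hp
      replace hp : (a, b) ∈ P i i := hp
      simp only [hP, mem_filter, mem_univ, true_and] at hp
      obtain ⟨hadj, hca, hcb⟩ := hp
      simp only [hE, mem_coe, mem_filter, mem_univ, true_and]
      exact ⟨G.mem_edgeSet.mpr hadj, a, b, rfl, hca, hcb⟩
  -- Nat.card conversions
  have hcardE : ∀ i j : Fin (2*k+1),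
      Nat.card {e : Sym2 V // e ∈ G.edgeSet ∧
        ∃ u w : V, e = s(u, w) ∧ c u = i ∧ c w = j} = (E i j).card := by
    intro i j
    simp [hE, Nat.card_eq_fintype_card, Fintype.card_subtype]
  have hcardG : Nat.card G.edgeSet = G.edgeFinset.card := by
    simp [Nat.card_eq_fintype_card, SimpleGraph.edgeFinset_card]
  constructor
  · intro i j hij
    rw [hcardE i j, hcardG, ← hPE i j hij, ← hAsum i j, hA2]
  · intro i
    have key : 2 * ((2*k+1)^2 * (E i i).card) = 2 * G.edgeFinset.card := by
      calc 2 * ((2*k+1)^2 * (E i i).card) = (2*k+1)^2 * (2 * (E i i).card) := by ring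
        _ = (2*k+1)^2 * (P i i).card := by rw [hPE2 i]
        _ = A.card := (hAsum i i).symm
        _ = 2 * G.edgeFinset.card := hA2
    have := Nat.eq_of_mul_eq_mul_left (by norm_num : 0 < 2) key
    rw [hcardE i i, hcardG, this]
end

section
/- If G is an r-regular graph on n vertices with r > 0 that admits a (2k+1)-neighborhood balanced coloring σ, then for every color i the number of vertices of color i equals n/(2k+1). -/
theorem stmt2 {V : Type*} [Fintype V] (G : SimpleGraph V) (k r : ℕ) (hk : 1 ≤ k)
    (hr : 0 < r) (hreg : ∀ v : V, Nat.card (G.neighborSet v) = r)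
    (c : V → Fin (2*k+1)) (h : NBColoring G k c) :
    ∀ i : Fin (2*k+1), (2*k+1) * Nat.card {v : V // c v = i} = Fintype.card V := by
  classical
  intro i
  let f : V → Fin (2*k+1) → ℕ := fun v j => (Finset.univ.filter (fun u => G.Adj v u ∧ c u = j)).card
  have hf : ∀ v j, Nat.card {u : V // G.Adj v u ∧ c u = j} = f v j := by
    intro v j
    simp [f, Nat.card_eq_fintype_card, Fintype.card_subtype]
  -- each vertex's neighborhood is partitioned by colors
  have hsum : ∀ v, ∑ j : Fin (2*k+1), f v j = r := by
    intro v
    have hdeg : (Finset.univ.filter (fun u => G.Adj v u)).card = r := by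
      have := hreg v
      rw [Nat.card_eq_fintype_card] at this
      rw [← this]
      simp [SimpleGraph.neighborFinset, Set.toFinset_setOf, Fintype.card_subtype,
        SimpleGraph.neighborSet]
      convert (Fintype.card_subtype (fun w => G.Adj v w)).symm
      exact Fintype.card_congr (Equiv.refl _)
    rw [← hdeg]
    rw [Finset.card_eq_sum_card_fiberwise (f := c) (t := Finset.univ) (by intros; simp)]
    apply Finset.sum_congr rfl
    intro j _
    congr 1
    rw [Finset.filter_filter]
  -- all fibers equal, so (2*k+1) * f v i = r
  have hconst : ∀ v, (2*k+1) * f v i = r := by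
    intro v
    have : ∀ j : Fin (2*k+1), f v j = f v i := by
      intro j
      rw [← hf, ← hf]; exact h v j i
    calc (2*k+1) * f v i = ∑ j : Fin (2*k+1), f v i := by simp [mul_comm]
    _ = ∑ j : Fin (2*k+1), f v j := by exact (Finset.sum_congr rfl (fun j _ => (this j).symm))
    _ = r := hsum v
  -- double counting
  set A := Finset.univ.filter (fun v => c v = i) with hA
  have hdc : ∑ v : V, f v i = A.card * r := by
    have : ∀ v : V, f v i = ∑ u : V, if G.Adj v u ∧ c u = i then 1 else 0 := by
      intro v; simp [f]
    simp_rw [this]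
    rw [Finset.sum_comm]
    have : ∀ u : V, (∑ v : V, if G.Adj u v ∧ c u = i then 1 else 0)
        = if c u = i then r else 0 := by
      intro u
      by_cases hcu : c u = i
      · simp only [hcu, and_true, if_true]
        have hdeg : (Finset.univ.filter (fun v => G.Adj u v)).card = r := by
          have := hreg u
          rw [Nat.card_eq_fintype_card] at this
          rw [← this]
          simp [SimpleGraph.neighborFinset, Set.toFinset_setOf, Fintype.card_subtype,
            SimpleGraph.neighborSet]
          convert (Fintype.card_subtype (fun w => G.Adj u w)).symm
          exact Fintype.card_congr (Equiv.refl _)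
        rw [← hdeg, Finset.card_filter]
      · simp [hcu]
    calc (∑ u : V, ∑ v : V, if G.Adj v u ∧ c u = i then 1 else 0)
        = ∑ u : V, ∑ v : V, if G.Adj u v ∧ c u = i then 1 else 0 := by
          apply Finset.sum_congr rfl; intro u _
          apply Finset.sum_congr rfl; intro v _
          simp [G.adj_comm]
    _ = ∑ u : V, if c u = i then r else 0 := Finset.sum_congr rfl (fun u _ => this u)
    _ = A.card * r := by simp [hA, Finset.sum_ite, Finset.sum_const, mul_comm]
  -- combine
  have key : (2*k+1) * (A.card * r) = Fintype.card V * r := by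
    rw [← hdc, Finset.mul_sum]
    calc (∑ v : V, (2*k+1) * f v i) = ∑ v : V, r := Finset.sum_congr rfl (fun v _ => hconst v)
    _ = Fintype.card V * r := by simp [Finset.sum_const, Finset.card_univ]
  have hcard : Nat.card {v : V // c v = i} = A.card := by
    simp [hA, Nat.card_eq_fintype_card, Fintype.card_subtype]
  rw [hcard]
  have := key
  rw [← mul_assoc] at this
  exact Nat.eq_of_mul_eq_mul_right hr this
end

section
/- If G is an r-regular graph on n vertices with r > 0 admitting a (2k+1)-neighborhood balanced coloring, then n ≡ 0 (mod 2k+1) and |E(G)| ≡ 0 (mod (2k+1)²). -/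
theorem stmt3 {V : Type*} [Fintype V] (G : SimpleGraph V) (k r : ℕ) (hk : 1 ≤ k)
    (hr : 0 < r) (hreg : ∀ v : V, Nat.card (G.neighborSet v) = r)
    (h : ∃ c : V → Fin (2*k+1), NBColoring G k c) :
    (2*k+1) ∣ Fintype.card V ∧ (2*k+1)^2 ∣ Nat.card G.edgeSet := by
  classical
  obtain ⟨c, hc⟩ := h
  have hq0 : 0 < 2*k+1 := by positivity
  rcases isEmpty_or_nonempty V with hV | hV
  · constructor
    · simp [Fintype.card_eq_zero]
    · have he : IsEmpty G.edgeSet := by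
        constructor
        rintro ⟨e, he⟩
        induction e using Sym2.ind with
        | _ a b => exact hV.elim a
      simp [Nat.card_of_isEmpty]
  -- degree lemma
  have hdeg : ∀ v : V, G.degree v = r := by
    intro v
    rw [← SimpleGraph.card_neighborSet_eq_degree, ← Nat.card_eq_fintype_card]
    exact hreg v
  set f : V → Fin (2*k+1) → ℕ :=
    fun v i => (Finset.univ.filter fun u => G.Adj v u ∧ c u = i).card with hf
  have hN : ∀ (v : V) (i : Fin (2*k+1)),
      Nat.card {u : V // G.Adj v u ∧ c u = i} = f v i := by
    intro v i
    rw [Nat.card_eq_fintype_card, Fintype.card_subtype]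
  have hfeq : ∀ (v : V) (i j : Fin (2*k+1)), f v i = f v j := by
    intro v i j
    rw [← hN, ← hN]; exact hc v i j
  have hsum : ∀ v : V, ∑ i : Fin (2*k+1), f v i = r := by
    intro v
    have h1 : (Finset.univ.filter (G.Adj v)).card
        = ∑ i : Fin (2*k+1), f v i := by
      rw [Finset.card_eq_sum_card_fiberwise (f := c)
        (t := (Finset.univ : Finset (Fin (2*k+1)))) (fun x _ => Finset.mem_univ _)]
      refine Finset.sum_congr rfl fun i _ => ?_
      rw [Finset.filter_filter]
    rw [← h1, ← SimpleGraph.neighborFinset_eq_filter, ← SimpleGraph.degree, hdeg]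
  -- (2k+1) * f v i = r for every v, i
  have hmain : ∀ (v : V) (i : Fin (2*k+1)), (2*k+1) * f v i = r := by
    intro v i
    calc (2*k+1) * f v i = ∑ _j : Fin (2*k+1), f v i := by
          simp [Finset.sum_const, mul_comm]
      _ = ∑ j : Fin (2*k+1), f v j :=
          (Finset.sum_congr rfl fun j _ => hfeq v j i).symm
      _ = r := hsum v
  obtain ⟨v₀⟩ := hV
  set m : ℕ := f v₀ 0 with hm
  have hfm : ∀ (v : V) (i : Fin (2*k+1)), f v i = m := by
    intro v i
    have := (hmain v i).trans (hmain v₀ 0).symm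
    exact Nat.eq_of_mul_eq_mul_left hq0 this
  have hrm : r = (2*k+1) * m := (hmain v₀ 0).symm
  -- color classes
  set C : Fin (2*k+1) → Finset V := fun i => Finset.univ.filter fun u => c u = i with hC
  -- double counting: ∑_v f v i = (C i).card * r
  have hdc : ∀ i : Fin (2*k+1), (C i).card * r = Fintype.card V * m := by
    intro i
    have h1 : ∑ v : V, f v i = Fintype.card V * m := by
      simp [hfm, Finset.sum_const, Finset.card_univ]
    have h2 : ∑ v : V, f v i = (C i).card * r := by
      have hstep : ∀ v : V, f v i
          = ∑ u : V, if c u = i then (if G.Adj v u then 1 else 0) else 0 := by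
        intro v
        show (Finset.univ.filter fun u => G.Adj v u ∧ c u = i).card = _
        rw [Finset.card_filter]
        refine Finset.sum_congr rfl fun u _ => ?_
        by_cases h1 : c u = i <;> by_cases h2 : G.Adj v u <;> simp [h1, h2]
      calc ∑ v : V, f v i
          = ∑ v : V, ∑ u : V, if c u = i then (if G.Adj v u then 1 else 0) else 0 :=
            Finset.sum_congr rfl fun v _ => hstep v
        _ = ∑ u : V, ∑ v : V, if c u = i then (if G.Adj v u then 1 else 0) else 0 :=
            Finset.sum_comm
        _ = ∑ u : V, if c u = i then r else 0 := by
            refine Finset.sum_congr rfl fun u _ => ?_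
            by_cases h1 : c u = i
            · simp only [h1, if_true]
              have h3 : ∑ v : V, (if G.Adj v u then 1 else 0)
                  = (Finset.univ.filter fun v => G.Adj v u).card :=
                (Finset.card_filter _ _).symm
              have h4 : (Finset.univ.filter fun v => G.Adj v u) = G.neighborFinset u := by
                ext v
                simp [SimpleGraph.adj_comm]
              rw [h3, h4, SimpleGraph.card_neighborFinset_eq_degree, hdeg]
            · simp [h1]
        _ = (C i).card * r := by
            rw [← Finset.sum_filter, Finset.sum_const, smul_eq_mul]
    rw [← h2, h1]
  -- all color classes have equal size
  have hCeq : ∀ i : Fin (2*k+1), (C i).card = (C 0).card := by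
    intro i
    have := (hdc i).trans (hdc 0).symm
    exact Nat.eq_of_mul_eq_mul_right hr this
  have hn : Fintype.card V = (2*k+1) * (C 0).card := by
    have h1 : (Finset.univ : Finset V).card
        = ∑ i : Fin (2*k+1), (C i).card :=
      Finset.card_eq_sum_card_fiberwise (f := c)
        (t := (Finset.univ : Finset (Fin (2*k+1)))) (fun x _ => Finset.mem_univ _)
    rw [← Finset.card_univ, h1]
    calc ∑ i : Fin (2*k+1), (C i).card = ∑ _i : Fin (2*k+1), (C 0).card :=
          Finset.sum_congr rfl fun i _ => hCeq i
      _ = (2*k+1) * (C 0).card := by simp [Finset.sum_const, mul_comm]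
  refine ⟨⟨(C 0).card, hn⟩, ?_⟩
  -- edge count
  have h2E : 2 * G.edgeFinset.card = (2*k+1)^2 * ((C 0).card * m) := by
    rw [← SimpleGraph.sum_degrees_eq_twice_card_edges]
    calc ∑ v : V, G.degree v = ∑ _v : V, r := Finset.sum_congr rfl fun v _ => hdeg v
      _ = Fintype.card V * r := by simp [Finset.sum_const, Finset.card_univ]
      _ = (2*k+1)^2 * ((C 0).card * m) := by rw [hn, hrm]; ring
  have hE : Nat.card G.edgeSet = G.edgeFinset.card := by
    rw [Nat.card_eq_fintype_card, SimpleGraph.edgeFinset_card]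
  rw [hE]
  have hdvd2 : (2*k+1)^2 ∣ 2 * G.edgeFinset.card := ⟨_, h2E⟩
  have hcop : Nat.Coprime ((2*k+1)^2) 2 := by
    apply Nat.Coprime.pow_left
    simp [Nat.coprime_two_right]
  exact (Nat.Coprime.dvd_of_dvd_mul_left hcop hdvd2)
end

section
/- The complete graph K_n admits a (2k+1)-neighborhood balanced coloring if and only if n = 1. -/
theorem stmt4 (k n : ℕ) (hk : 1 ≤ k) (hn : 1 ≤ n) :
    (∃ c : Fin n → Fin (2*k+1), NBColoring (⊤ : SimpleGraph (Fin n)) k c) ↔ n = 1 := by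
  constructor
  · rintro ⟨c, hc⟩
    by_contra hne
    have hn2 : 2 ≤ n := by omega
    set S : Fin (2*k+1) → ℕ := fun t => (Finset.univ.filter (fun u => c u = t)).card with hS
    have key : ∀ (v : Fin n) (t : Fin (2*k+1)),
        Nat.card {u : Fin n // (⊤ : SimpleGraph (Fin n)).Adj v u ∧ c u = t}
          + (if c v = t then 1 else 0) = S t := by
      intro v t
      have h1 : Nat.card {u : Fin n // (⊤ : SimpleGraph (Fin n)).Adj v u ∧ c u = t}
          = (Finset.univ.filter (fun u => ¬ u = v ∧ c u = t)).card := by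
        rw [Nat.card_eq_fintype_card, Fintype.card_subtype]
        congr 1
        ext u
        simp [SimpleGraph.top_adj, ne_comm, eq_comm]
      have h2 : (Finset.univ.filter (fun u => u = v ∧ c u = t)).card
          = if c v = t then 1 else 0 := by
        split_ifs with h
        · rw [Finset.card_eq_one]
          refine ⟨v, ?_⟩
          ext u
          simp only [Finset.mem_filter, Finset.mem_univ, true_and, Finset.mem_singleton]
          constructor
          · rintro ⟨rfl, _⟩; rfl
          · rintro rfl; exact ⟨rfl, h⟩
        · rw [Finset.card_eq_zero]
          ext u
          simp only [Finset.mem_filter, Finset.mem_univ, true_and, Finset.notMem_empty,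
            iff_false]
          rintro ⟨rfl, hu⟩; exact h hu
      rw [h1, ← h2, hS]
      have h3 := Finset.card_filter_add_card_filter_not
        (s := Finset.univ.filter (fun u => c u = t)) (p := fun u => ¬ u = v)
      simp only [Finset.filter_filter, not_not] at h3
      show _ = (Finset.univ.filter (fun u => c u = t)).card
      rw [← h3]
      congr 1
      · congr 1; ext u; simp [and_comm]
      · congr 1; ext u; simp [and_comm]
    set v0 : Fin n := ⟨0, by omega⟩ with hv0
    set u1 : Fin n := ⟨1, by omega⟩ with hu1
    have hvu : v0 ≠ u1 := by simp [hv0, hu1, Fin.ext_iff]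
    set i := c v0 with hi
    obtain ⟨j, hj⟩ : ∃ j : Fin (2*k+1), j ≠ i := by
      refine ⟨if i.val = 0 then ⟨1, by omega⟩ else ⟨0, by omega⟩, ?_⟩
      split_ifs with h <;> simp [Fin.ext_iff] <;> omega
    have hki := key v0 i
    rw [if_pos rfl] at hki
    have hkj := key v0 j
    rw [if_neg (fun h => hj (hi.trans h).symm)] at hkj
    have h1 := hc v0 i j
    have hpos : 1 ≤ Nat.card {u : Fin n //
        (⊤ : SimpleGraph (Fin n)).Adj v0 u ∧ c u = c u1} := by
      have hne : Nonempty {u : Fin n //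
          (⊤ : SimpleGraph (Fin n)).Adj v0 u ∧ c u = c u1} :=
        ⟨⟨u1, by simpa [SimpleGraph.top_adj] using hvu, rfl⟩⟩
      exact Nat.card_pos
    have h2 := hc v0 (c u1) j
    have hSj : 1 ≤ S j := by omega
    obtain ⟨w, hw⟩ : ∃ w : Fin n, c w = j := by
      obtain ⟨w, hwmem⟩ := Finset.card_pos.mp (by exact hSj)
      exact ⟨w, (Finset.mem_filter.mp hwmem).2⟩
    have hkwj := key w j
    rw [if_pos hw] at hkwj
    have hkwi := key w i
    rw [if_neg (fun h => hj (hw.symm.trans h))] at hkwi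
    have h3 := hc w i j
    omega
  · rintro rfl
    refine ⟨fun _ => 0, fun v i j => ?_⟩
    have h : ∀ t : Fin (2*k+1),
        Nat.card {u : Fin 1 // (⊤ : SimpleGraph (Fin 1)).Adj v u ∧ (fun _ => (0 : Fin (2*k+1))) u = t} = 0 := by
      intro t
      rw [Nat.card_eq_zero]
      left
      constructor
      rintro ⟨u, hadj, _⟩
      exact hadj.ne (Subsingleton.elim v u)
    rw [h i, h j]
end

section
/- For p ≥ 2, the complete multipartite graph K_{n_1,…,n_p} admits a (2k+1)-neighborhood balanced coloring if and only if n_i ≡ 0 (mod 2k+1) for every i = 1, …, p. -/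
lemma ncard_eq_sum {V : Type*} [Fintype V] (q : V → Prop) [DecidablePred q] :
    Nat.card {u // q u} = ∑ u, if q u then 1 else 0 := by
  rw [Nat.card_eq_fintype_card, Fintype.card_subtype, Finset.card_filter]

lemma sum_sigma_univ {p : ℕ} {n : Fin p → ℕ} (g : (Σ i : Fin p, Fin (n i)) → ℕ) :
    ∑ u : (Σ i : Fin p, Fin (n i)), g u = ∑ i : Fin p, ∑ x : Fin (n i), g ⟨i, x⟩ := by
  rw [← Finset.univ_sigma_univ, Finset.sum_sigma]

lemma count_mod (m q r : ℕ) (hm : 0 < m) (hr : r < m) :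
    ((Finset.range (m*q)).filter (fun x => x % m = r)).card = q := by
  induction q with
  | zero => simp
  | succ q ih =>
      have : m * (q+1) = m*q + m := by ring
      rw [this, Finset.range_add, Finset.filter_union,
        Finset.card_union_of_disjoint]
      · have h2 : (((Finset.range m).map (addLeftEmbedding (m*q))).filter
            (fun x => x % m = r)).card = 1 := by
          rw [Finset.filter_map, Finset.card_map]
          have h3 : ((Finset.range m).filter
              (fun x => ((fun x => x % m = r) ∘ addLeftEmbedding (m*q)) x))
              = {r} := by
            ext x
            simp only [Finset.mem_filter, Finset.mem_range, Function.comp,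
              addLeftEmbedding_apply, Finset.mem_singleton]
            constructor
            · rintro ⟨hx, he⟩
              rwa [Nat.mul_add_mod, Nat.mod_eq_of_lt hx] at he
            · rintro rfl
              exact ⟨hr, by rw [Nat.mul_add_mod, Nat.mod_eq_of_lt hr]⟩
          rw [h3, Finset.card_singleton]
        omega
      · apply Finset.disjoint_filter_filter
        apply Finset.disjoint_left.2
        intro a ha hb
        simp only [Finset.mem_range] at ha
        simp only [Finset.mem_map, addLeftEmbedding_apply] at hb
        omega

theorem stmt5 (k p : ℕ) (hk : 1 ≤ k) (hp : 2 ≤ p) (n : Fin p → ℕ)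
    (hn : ∀ i, 0 < n i) :
    (∃ c : (Σ i : Fin p, Fin (n i)) → Fin (2*k+1),
      NBColoring (SimpleGraph.completeMultipartiteGraph (fun i : Fin p => Fin (n i))) k c) ↔
    ∀ i : Fin p, (2*k+1) ∣ n i := by
  classical
  set m := 2*k+1 with hm
  have hm1 : 0 < m := by omega
  constructor
  · rintro ⟨c, hc⟩
    -- counts
    set A : (i : Fin p) → Fin m → ℕ :=
      fun i j => ∑ x : Fin (n i), if c ⟨i,x⟩ = j then 1 else 0 with hA
    set T : Fin m → ℕ := fun j => ∑ i : Fin p, A i j with hT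
    set Nb : (Σ i : Fin p, Fin (n i)) → Fin m → ℕ :=
      fun v j => ∑ u : (Σ i : Fin p, Fin (n i)),
        if u.1 ≠ v.1 ∧ c u = j then 1 else 0 with hNbdef
    have hcard : ∀ v j, Nat.card {u : (Σ i : Fin p, Fin (n i)) //
        (SimpleGraph.completeMultipartiteGraph (fun i : Fin p => Fin (n i))).Adj v u
        ∧ c u = j} = Nb v j := by
      intro v j
      rw [ncard_eq_sum]
      apply Finset.sum_congr rfl
      intro u _
      congr 1
      rw [eq_iff_iff]
      simp only [SimpleGraph.comap_adj, SimpleGraph.top_adj]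
      constructor <;> (rintro ⟨h1, h2⟩; exact ⟨h1.symm, h2⟩)
    have hNb : ∀ v j₁ j₂, Nb v j₁ = Nb v j₂ := by
      intro v j₁ j₂
      rw [← hcard v j₁, ← hcard v j₂]
      exact hc v j₁ j₂
    -- A v.1 j + Nb v j = T j
    have hsplit : ∀ (v : Σ i : Fin p, Fin (n i)) (j : Fin m),
        A v.1 j + Nb v j = T j := by
      intro v j
      have hTalt : T j = ∑ u : (Σ i : Fin p, Fin (n i)), if c u = j then 1 else 0 := by
        rw [sum_sigma_univ]
      have hAalt : A v.1 j = ∑ u : (Σ i : Fin p, Fin (n i)),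
          if u.1 = v.1 ∧ c u = j then 1 else 0 := by
        rw [sum_sigma_univ]
        rw [Finset.sum_eq_single v.1]
        · apply Finset.sum_congr rfl
          intro x _
          simp
        · intro i _ hi
          apply Finset.sum_eq_zero
          intro x _
          simp [hi]
        · simp
      rw [hTalt, hAalt, hNbdef, ← Finset.sum_add_distrib]
      apply Finset.sum_congr rfl
      intro u _
      by_cases h1 : u.1 = v.1 <;> by_cases h2 : c u = j <;> simp [h1, h2]
    have hrow : ∀ i, ∑ j : Fin m, A i j = n i := by
      intro i
      rw [hA]
      rw [Finset.sum_comm]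
      have : ∀ x : Fin (n i), ∑ j : Fin m, (if c ⟨i,x⟩ = j then 1 else 0) = 1 := by
        intro x
        simp
      simp only [this]
      simp
    -- pick a vertex in each part
    set v0 : (i : Fin p) → (Σ i : Fin p, Fin (n i)) := fun i => ⟨i, ⟨0, hn i⟩⟩ with hv0
    set D : Fin p → ℕ := fun i => Nb (v0 i) 0 with hD
    have hAD : ∀ i j, A i j + D i = T j := by
      intro i j
      have h1 := hsplit (v0 i) j
      rw [hNb (v0 i) j 0] at h1
      exact h1
    set S : ℕ := ∑ i : Fin p, D i with hS
    have hTS : ∀ j, T j + S = p * T j := by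
      intro j
      have h1 : ∑ i : Fin p, (A i j + D i) = ∑ i : Fin p, T j :=
        Finset.sum_congr rfl (fun i _ => hAD i j)
      rw [Finset.sum_add_distrib] at h1
      simp only [Finset.sum_const, Finset.card_univ, Fintype.card_fin, smul_eq_mul] at h1
      exact h1
    obtain ⟨q, rfl⟩ : ∃ q, p = q + 2 := ⟨p - 2, by omega⟩
    have hTeq : ∀ j j', T j = T j' := by
      intro j j'
      have h1 := hTS j
      have h2 := hTS j'
      have e1 : (q+2) * T j = q * T j + T j + T j := by ring
      have e2 : (q+2) * T j' = q * T j' + T j' + T j' := by ring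
      rw [e1] at h1; rw [e2] at h2
      rcases Nat.lt_trichotomy (T j) (T j') with h | h | h
      · have := Nat.mul_le_mul_left q h.le; linarith
      · exact h
      · have := Nat.mul_le_mul_left q h.le; linarith
    have hAeq : ∀ i j, A i j = A i 0 := by
      intro i j
      have h1 := hAD i j
      have h2 := hAD i 0
      have h3 := hTeq j 0
      omega
    intro i
    refine ⟨A i 0, ?_⟩
    rw [← hrow i]
    calc ∑ j : Fin m, A i j = ∑ _j : Fin m, A i 0 :=
          Finset.sum_congr rfl (fun j _ => hAeq i j)
      _ = m * A i 0 := by simp [Finset.sum_const, mul_comm]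
  · intro h
    refine ⟨fun u => ⟨(u.2 : ℕ) % m, Nat.mod_lt _ hm1⟩, ?_⟩
    intro v i j
    rw [ncard_eq_sum, ncard_eq_sum]
    have key : ∀ (r : Fin m), (∑ u : (Σ i : Fin p, Fin (n i)),
        if (SimpleGraph.completeMultipartiteGraph (fun i : Fin p => Fin (n i))).Adj v u
          ∧ (⟨(u.2 : ℕ) % m, Nat.mod_lt _ hm1⟩ : Fin m) = r then 1 else 0)
        = ∑ i' : Fin p, if i' = v.1 then 0 else n i' / m := by
      intro r
      rw [sum_sigma_univ]
      apply Finset.sum_congr rfl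
      intro i' _
      by_cases hi : i' = v.1
      · simp only [hi, if_pos rfl]
        apply Finset.sum_eq_zero
        intro x _
        simp [hi]
      · rw [if_neg hi]
        have hadj : ∀ x : Fin (n i'),
            (SimpleGraph.completeMultipartiteGraph (fun i : Fin p => Fin (n i))).Adj v ⟨i', x⟩ := by
          intro x
          simp only [SimpleGraph.comap_adj, SimpleGraph.top_adj]
          exact fun he => hi he.symm
        have h1 : (∑ x : Fin (n i'),
            if (SimpleGraph.completeMultipartiteGraph (fun i : Fin p => Fin (n i))).Adj v ⟨i', x⟩
              ∧ (⟨(x : ℕ) % m, Nat.mod_lt _ hm1⟩ : Fin m) = r then 1 else 0)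
            = ∑ x : Fin (n i'), if (x : ℕ) % m = (r : ℕ) then 1 else 0 := by
          apply Finset.sum_congr rfl
          intro x _
          congr 1
          simp only [hadj x, true_and, Fin.ext_iff]
        rw [h1]
        obtain ⟨w, hw⟩ := h i'
        rw [Fin.sum_univ_eq_sum_range (fun x => if x % m = (r : ℕ) then 1 else 0)]
        rw [← Finset.card_filter]
        rw [hw, count_mod m w (r : ℕ) hm1 r.isLt]
        rw [show (2*k+1)*w = m*w from rfl, Nat.mul_div_cancel_left w hm1]
    rw [key i, key j]
end

section
/- If graphs G and H both admit (2k+1)-neighborhood balanced colorings, then the lexicographic product G[H] admits a (2k+1)-neighborhood balanced coloring. -/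
/-- Lexicographic product of simple graphs. -/
def lexProd {α β : Type*} (G : SimpleGraph α) (H : SimpleGraph β) : SimpleGraph (α × β) where
  Adj x y := G.Adj x.1 y.1 ∨ (x.1 = y.1 ∧ H.Adj x.2 y.2)
  symm := ⟨by
    rintro x y (h | ⟨h1, h2⟩)
    · exact Or.inl h.symm
    · exact Or.inr ⟨h1.symm, h2.symm⟩⟩
  loopless := ⟨by
    rintro x (h | ⟨_, h⟩)
    · exact G.irrefl h
    · exact H.irrefl h⟩

open Finset

lemma natCard_subtype_eq_filter {V : Type*} [Fintype V] (p : V → Prop) [DecidablePred p] :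
    Nat.card {x // p x} = (univ.filter p).card := by
  rw [Nat.card_eq_fintype_card, Fintype.card_subtype]

theorem stmt6 {α β : Type*} [Fintype α] [Fintype β]
    (G : SimpleGraph α) (H : SimpleGraph β) (k : ℕ) (hk : 1 ≤ k)
    (hG : ∃ c : α → Fin (2*k+1), NBColoring G k c)
    (hH : ∃ c : β → Fin (2*k+1), NBColoring H k c) :
    ∃ c : α × β → Fin (2*k+1), NBColoring (lexProd G H) k c := by
  classical
  obtain ⟨cG, hGb⟩ := hG
  obtain ⟨cH, hHb⟩ := hH
  refine ⟨fun x => cG x.1 + cH x.2, ?_⟩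
  rintro ⟨a, b⟩ i j
  set n : Fin (2*k+1) → ℕ := fun t => Nat.card {v' : β // cH v' = t} with hn
  set m : Fin (2*k+1) → ℕ := fun t => Nat.card {u' : α // G.Adj a u' ∧ cG u' = t} with hm
  have key : ∀ i : Fin (2*k+1),
      Nat.card {u : α × β // (lexProd G H).Adj (a, b) u ∧ cG u.1 + cH u.2 = i}
        = (∑ t : Fin (2*k+1), m t * n (i - t))
          + Nat.card {v' : β // H.Adj b v' ∧ cH v' = i - cG a} := by
    intro i
    -- split the adjacency disjunction
    have e1 : {u : α × β // (lexProd G H).Adj (a, b) u ∧ cG u.1 + cH u.2 = i}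
        ≃ {u : α × β // (G.Adj a u.1 ∧ cG u.1 + cH u.2 = i)
            ∨ ((a = u.1 ∧ H.Adj b u.2) ∧ cG u.1 + cH u.2 = i)} := by
      refine Equiv.subtypeEquivRight fun u => ?_
      show ((G.Adj a u.1 ∨ (a = u.1 ∧ H.Adj b u.2)) ∧ _) ↔ _
      tauto
    have e2 : {u : α × β // (G.Adj a u.1 ∧ cG u.1 + cH u.2 = i)
            ∨ ((a = u.1 ∧ H.Adj b u.2) ∧ cG u.1 + cH u.2 = i)}
        ≃ {u : α × β // G.Adj a u.1 ∧ cG u.1 + cH u.2 = i}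
          ⊕ {u : α × β // (a = u.1 ∧ H.Adj b u.2) ∧ cG u.1 + cH u.2 = i} := by
      refine subtypeOrEquiv _ _ ?_
      rw [Pi.disjoint_iff]
      intro u
      rw [Prop.disjoint_iff]
      rintro ⟨⟨h, -⟩, ⟨h1, -⟩, -⟩
      exact G.irrefl (h1 ▸ h)
    have cA : Nat.card {u : α × β // G.Adj a u.1 ∧ cG u.1 + cH u.2 = i}
        = ∑ t : Fin (2*k+1), m t * n (i - t) := by
      have e3 : {u : α × β // G.Adj a u.1 ∧ cG u.1 + cH u.2 = i}
          ≃ Σ u' : α, {v' : β // G.Adj a u' ∧ cG u' + cH v' = i} :=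
        Equiv.subtypeProdEquivSigmaSubtype fun u' v' => G.Adj a u' ∧ cG u' + cH v' = i
      have fiber : ∀ u' : α, Nat.card {v' : β // G.Adj a u' ∧ cG u' + cH v' = i}
          = if G.Adj a u' then n (i - cG u') else 0 := by
        intro u'
        by_cases h : G.Adj a u'
        · rw [if_pos h]
          simp only [hn]
          refine Nat.card_congr (Equiv.subtypeEquivRight fun v' => ?_)
          constructor
          · rintro ⟨-, hv⟩; rw [← hv]; abel
          · intro hv; exact ⟨h, by rw [hv]; abel⟩
        · rw [if_neg h]
          have : IsEmpty {v' : β // G.Adj a u' ∧ cG u' + cH v' = i} :=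
            ⟨fun v => h v.2.1⟩
          exact Nat.card_of_isEmpty
      rw [Nat.card_congr e3, Nat.card_eq_fintype_card, Fintype.card_sigma]
      have : ∀ u' : α, Fintype.card {v' : β // G.Adj a u' ∧ cG u' + cH v' = i}
          = if G.Adj a u' then n (i - cG u') else 0 := fun u' => by
        rw [← Nat.card_eq_fintype_card]; exact fiber u'
      rw [Finset.sum_congr rfl fun u' _ => this u']
      -- group by the color of u'
      rw [← Finset.sum_fiberwise (univ : Finset α) cG
        (fun u' => if G.Adj a u' then n (i - cG u') else 0)]
      refine Finset.sum_congr rfl fun t _ => ?_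
      have inner : ∀ u' ∈ univ.filter (fun u' => cG u' = t),
          (if G.Adj a u' then n (i - cG u') else 0)
            = if G.Adj a u' then n (i - t) else 0 := by
        intro u' hu'
        rw [mem_filter] at hu'
        rw [hu'.2]
      rw [Finset.sum_congr rfl inner, Finset.sum_ite, Finset.sum_const_zero,
        Finset.sum_const, add_zero, Finset.filter_filter, smul_eq_mul]
      congr 1
      show _ = Nat.card {u' : α // G.Adj a u' ∧ cG u' = t}
      rw [natCard_subtype_eq_filter]
      congr 1
      ext u'
      simp only [mem_filter]
      tauto
    have cB : Nat.card {u : α × β // (a = u.1 ∧ H.Adj b u.2) ∧ cG u.1 + cH u.2 = i}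
        = Nat.card {v' : β // H.Adj b v' ∧ cH v' = i - cG a} := by
      refine Nat.card_congr ?_
      refine ⟨fun u => ⟨u.1.2, u.2.1.2, ?_⟩, fun v => ⟨(a, v.1), ⟨rfl, v.2.1⟩, ?_⟩, ?_, ?_⟩
      · obtain ⟨⟨u1, u2⟩, ⟨h1, h2⟩, h3⟩ := u
        simp only at *
        subst h1
        rw [← h3]; abel
      · have := v.2.2
        simp only
        rw [this]; abel
      · rintro ⟨⟨u1, u2⟩, ⟨h1, h2⟩, h3⟩
        simp only at h1
        subst h1
        rfl
      · rintro ⟨v, hv⟩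
        rfl
    rw [Nat.card_congr (e1.trans e2), Nat.card_sum, cA, cB]
  rw [key i, key j]
  congr 1
  · have hmt : ∀ t : Fin (2*k+1), m t = m 0 := fun t => hGb a t 0
    calc ∑ t : Fin (2*k+1), m t * n (i - t)
        = ∑ t : Fin (2*k+1), m 0 * n (i - t) := by
          refine Finset.sum_congr rfl fun t _ => by rw [hmt t]
      _ = m 0 * ∑ t : Fin (2*k+1), n (i - t) := by rw [Finset.mul_sum]
      _ = m 0 * ∑ s : Fin (2*k+1), n s := by
          congr 1
          exact Fintype.sum_equiv (Equiv.subLeft i) _ _ fun t => rfl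
      _ = ∑ t : Fin (2*k+1), m 0 * n (j - t) := by
          rw [Finset.mul_sum]
          exact Fintype.sum_equiv (Equiv.subLeft j) _ _
            (fun s => by rw [Equiv.subLeft_apply, sub_sub_cancel])
      _ = ∑ t : Fin (2*k+1), m t * n (j - t) := by
          refine Finset.sum_congr rfl fun t _ => by rw [hmt t]
  · exact hHb b (i - cG a) (j - cG a)
end

section
/- If G admits a (2k+1)-neighborhood balanced coloring, then for any graph H the direct (tensor) product G × H admits a (2k+1)-neighborhood balanced coloring. -/
/-- Direct (tensor) product of simple graphs. -/
def directProd {α β : Type*} (G : SimpleGraph α) (H : SimpleGraph β) : SimpleGraph (α × β) where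
  Adj x y := G.Adj x.1 y.1 ∧ H.Adj x.2 y.2
  symm := ⟨fun _ _ h => ⟨h.1.symm, h.2.symm⟩⟩
  loopless := ⟨fun x h => G.loopless.irrefl _ h.1⟩

theorem stmt8 {α β : Type*} [Fintype α] [Fintype β]
    (G : SimpleGraph α) (H : SimpleGraph β) (k : ℕ) (hk : 1 ≤ k)
    (hG : ∃ c : α → Fin (2*k+1), NBColoring G k c) :
    ∃ c : α × β → Fin (2*k+1), NBColoring (directProd G H) k c := by
  obtain ⟨c, hc⟩ := hG
  refine ⟨fun p => c p.1, fun v i j => ?_⟩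
  have key : ∀ m : Fin (2*k+1),
      Nat.card {p : α × β // (directProd G H).Adj v p ∧ c p.1 = m} =
      Nat.card {u : α // G.Adj v.1 u ∧ c u = m} * Nat.card {x : β // H.Adj v.2 x} := by
    intro m
    rw [← Nat.card_prod]
    apply Nat.card_congr
    exact ⟨fun ⟨p, h⟩ => ⟨⟨p.1, h.1.1, h.2⟩, ⟨p.2, h.1.2⟩⟩,
      fun ⟨⟨u, hu⟩, ⟨x, hx⟩⟩ => ⟨(u, x), ⟨hu.1, hx⟩, hu.2⟩,
      fun ⟨p, h⟩ => rfl, fun ⟨⟨u, hu⟩, ⟨x, hx⟩⟩ => rfl⟩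
  rw [key, key, hc v.1 i j]
end

section
/- Let 2k+1 be prime and a, b, c, d positive integers. The direct product K_{a,b} × K_{c,d} admits a (2k+1)-neighborhood balanced coloring if and only if K_{a,b} admits one or K_{c,d} admits one, i.e., iff (2k+1 divides both a and b) or (2k+1 divides both c and d). -/
/-- Split a subtype of a sum whose predicate forces the right summand. -/
def sumRightEquiv {α β : Type*} (P : α ⊕ β → Prop) (h : ∀ u, P u → u.isRight) :
    {u : α ⊕ β // P u} ≃ {b : β // P (Sum.inr b)} where
  toFun := fun u => match u with
    | ⟨Sum.inl a, hu⟩ => absurd (h _ hu) (by simp)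
    | ⟨Sum.inr b, hu⟩ => ⟨b, hu⟩
  invFun := fun b => ⟨Sum.inr b.1, b.2⟩
  left_inv := by
    rintro ⟨(a | b), hu⟩
    · exact absurd (h _ hu) (by simp)
    · rfl
  right_inv := fun b => rfl

/-- Split a subtype of a sum whose predicate forces the left summand. -/
def sumLeftEquiv {α β : Type*} (P : α ⊕ β → Prop) (h : ∀ u, P u → u.isLeft) :
    {u : α ⊕ β // P u} ≃ {a : α // P (Sum.inl a)} where
  toFun := fun u => match u with
    | ⟨Sum.inr b, hu⟩ => absurd (h _ hu) (by simp)
    | ⟨Sum.inl a, hu⟩ => ⟨a, hu⟩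
  invFun := fun a => ⟨Sum.inl a.1, a.2⟩
  left_inv := by
    rintro ⟨(a | b), hu⟩
    · rfl
    · exact absurd (h _ hu) (by simp)
  right_inv := fun a => rfl

/-- Residue classes inside `Fin n` have `n / p` elements when `p ∣ n`. -/
def finModEquiv (n p : ℕ) (hp : 0 < p) (h : p ∣ n) (i : ℕ) (hi : i < p) :
    {j : Fin n // (j : ℕ) % p = i} ≃ Fin (n / p) where
  toFun := fun j => ⟨(j : ℕ) / p, Nat.div_lt_div_of_lt_of_dvd h j.1.isLt⟩
  invFun := fun q => ⟨⟨q * p + i, by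
      have h1 : (q : ℕ) + 1 ≤ n / p := q.isLt
      have h2 : ((q : ℕ) + 1) * p ≤ (n / p) * p := Nat.mul_le_mul_right p h1
      rw [Nat.div_mul_cancel h] at h2
      calc (q : ℕ) * p + i < (q : ℕ) * p + p := by omega
        _ = ((q : ℕ) + 1) * p := by ring
        _ ≤ n := h2⟩, by show ((q : ℕ) * p + i) % p = i; rw [Nat.mul_add_mod', Nat.mod_eq_of_lt hi]⟩
  left_inv := by
    rintro ⟨j, hj⟩
    apply Subtype.ext
    apply Fin.ext
    simp only
    conv_rhs => rw [← Nat.div_add_mod (j : ℕ) p]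
    rw [hj, Nat.mul_comm]
  right_inv := by
    rintro ⟨q, hq⟩
    apply Fin.ext
    show ((q : ℕ) * p + i) / p = q
    rw [Nat.mul_comm, Nat.mul_add_div hp, Nat.div_eq_of_lt hi, Nat.add_zero]

lemma card_fin_mod (n p : ℕ) (hp : 0 < p) (h : p ∣ n) (i : ℕ) (hi : i < p) :
    Nat.card {j : Fin n // (j : ℕ) % p = i} = n / p := by
  rw [Nat.card_congr (finModEquiv n p hp h i hi)]
  simp

/-- In an NB coloring, the number of colors divides every degree. -/
lemma nb_dvd_degree {V : Type*} [Fintype V] (G : SimpleGraph V) (k : ℕ)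
    (col : V → Fin (2*k+1)) (h : NBColoring G k col) (v : V) :
    (2*k+1) ∣ Nat.card {u : V // G.Adj v u} := by
  classical
  have e : {u : V // G.Adj v u} ≃ Σ i : Fin (2*k+1), {u : V // G.Adj v u ∧ col u = i} :=
    { toFun := fun u => ⟨col u.1, u.1, u.2, rfl⟩
      invFun := fun x => ⟨x.2.1, x.2.2.1⟩
      left_inv := fun u => rfl
      right_inv := by rintro ⟨i, u, hu, rfl⟩; rfl }
  rw [Nat.card_congr e, Nat.card_eq_fintype_card, Fintype.card_sigma]
  have key : ∀ i : Fin (2*k+1), Fintype.card {u : V // G.Adj v u ∧ col u = i}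
      = Nat.card {u : V // G.Adj v u ∧ col u = 0} := by
    intro i
    rw [← Nat.card_eq_fintype_card]
    exact h v i 0
  rw [Finset.sum_congr rfl (fun i _ => key i), Finset.sum_const, Finset.card_univ,
    Fintype.card_fin, smul_eq_mul]
  exact Dvd.intro _ rfl

lemma card_adj_prod_fst {α β : Type*} (G : SimpleGraph α) (H : SimpleGraph β)
    (v : α × β) (P : α → Prop) :
    Nat.card {u : α × β // (directProd G H).Adj v u ∧ P u.1} =
      Nat.card {u1 : α // G.Adj v.1 u1 ∧ P u1} * Nat.card {u2 : β // H.Adj v.2 u2} := by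
  rw [← Nat.card_prod]
  exact Nat.card_congr ((Equiv.subtypeEquivRight (fun u => by
    show (G.Adj v.1 u.1 ∧ H.Adj v.2 u.2) ∧ P u.1 ↔ (G.Adj v.1 u.1 ∧ P u.1) ∧ H.Adj v.2 u.2
    tauto)).trans Equiv.subtypeProdEquivProd)

lemma card_adj_prod_snd {α β : Type*} (G : SimpleGraph α) (H : SimpleGraph β)
    (v : α × β) (P : β → Prop) :
    Nat.card {u : α × β // (directProd G H).Adj v u ∧ P u.2} =
      Nat.card {u1 : α // G.Adj v.1 u1} * Nat.card {u2 : β // H.Adj v.2 u2 ∧ P u2} := by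
  rw [← Nat.card_prod]
  exact Nat.card_congr ((Equiv.subtypeEquivRight (fun u => by
    show (G.Adj v.1 u.1 ∧ H.Adj v.2 u.2) ∧ P u.2 ↔ G.Adj v.1 u.1 ∧ (H.Adj v.2 u.2 ∧ P u.2)
    tauto)).trans Equiv.subtypeProdEquivProd)

lemma card_deg_prod {α β : Type*} (G : SimpleGraph α) (H : SimpleGraph β) (v : α × β) :
    Nat.card {u : α × β // (directProd G H).Adj v u} =
      Nat.card {u1 : α // G.Adj v.1 u1} * Nat.card {u2 : β // H.Adj v.2 u2} := by
  rw [← Nat.card_prod]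
  exact Nat.card_congr ((Equiv.subtypeEquivRight (fun u => Iff.rfl)).trans
    Equiv.subtypeProdEquivProd)

lemma adj_inl_isRight {α β : Type*} (x : α) (u : α ⊕ β)
    (h : (completeBipartiteGraph α β).Adj (Sum.inl x) u) : u.isRight := by
  simp only [completeBipartiteGraph_adj] at h
  rcases h with ⟨_, h⟩ | ⟨h, _⟩
  · exact h
  · simp at h

lemma adj_inr_isLeft {α β : Type*} (y : β) (u : α ⊕ β)
    (h : (completeBipartiteGraph α β).Adj (Sum.inr y) u) : u.isLeft := by
  simp only [completeBipartiteGraph_adj] at h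
  rcases h with ⟨h, _⟩ | ⟨_, h⟩
  · simp at h
  · exact h

lemma card_adj_inl_pred {α β : Type*} (x : α) (Q : α ⊕ β → Prop) :
    Nat.card {u : α ⊕ β // (completeBipartiteGraph α β).Adj (Sum.inl x) u ∧ Q u} =
      Nat.card {b : β // Q (Sum.inr b)} := by
  refine Nat.card_congr ((sumRightEquiv _ (fun u hu => adj_inl_isRight x u hu.1)).trans
    (Equiv.subtypeEquivRight (fun b => ?_)))
  simp

lemma card_adj_inr_pred {α β : Type*} (y : β) (Q : α ⊕ β → Prop) :
    Nat.card {u : α ⊕ β // (completeBipartiteGraph α β).Adj (Sum.inr y) u ∧ Q u} =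
      Nat.card {a : α // Q (Sum.inl a)} := by
  refine Nat.card_congr ((sumLeftEquiv _ (fun u hu => adj_inr_isLeft y u hu.1)).trans
    (Equiv.subtypeEquivRight (fun a => ?_)))
  simp

lemma card_adj_inl {α β : Type*} [Fintype β] (x : α) :
    Nat.card {u : α ⊕ β // (completeBipartiteGraph α β).Adj (Sum.inl x) u} =
      Fintype.card β := by
  rw [Nat.card_congr ((sumRightEquiv _ (fun u hu => adj_inl_isRight x u hu)).trans
    (Equiv.subtypeUnivEquiv (fun b => by simp)))]
  simp [Nat.card_eq_fintype_card]

lemma card_adj_inr {α β : Type*} [Fintype α] (y : β) :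
    Nat.card {u : α ⊕ β // (completeBipartiteGraph α β).Adj (Sum.inr y) u} =
      Fintype.card α := by
  rw [Nat.card_congr ((sumLeftEquiv _ (fun u hu => adj_inr_isLeft y u hu)).trans
    (Equiv.subtypeUnivEquiv (fun a => by simp)))]
  simp [Nat.card_eq_fintype_card]

/-- The balanced coloring of a complete bipartite graph by residues. -/
def bipCol (a b p : ℕ) (hp : 0 < p) : Fin a ⊕ Fin b → Fin p :=
  Sum.elim (fun i => ⟨(i : ℕ) % p, Nat.mod_lt _ hp⟩) (fun j => ⟨(j : ℕ) % p, Nat.mod_lt _ hp⟩)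

lemma bip_nb (k a b : ℕ) (hda : (2*k+1) ∣ a) (hdb : (2*k+1) ∣ b) :
    NBColoring (completeBipartiteGraph (Fin a) (Fin b)) k
      (bipCol a b (2*k+1) (by omega)) := by
  have hp : 0 < 2*k+1 := by omega
  have hl : ∀ (n : ℕ) (hdn : (2*k+1) ∣ n) (i : Fin (2*k+1)),
      Nat.card {j : Fin n // (⟨(j : ℕ) % (2*k+1), Nat.mod_lt _ hp⟩ : Fin (2*k+1)) = i}
        = n / (2*k+1) := by
    intro n hdn i
    rw [Nat.card_congr (Equiv.subtypeEquivRight (fun j => by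
      rw [Fin.ext_iff]))]
    exact card_fin_mod n (2*k+1) hp hdn i i.isLt
  intro v i j
  cases v with
  | inl x =>
    rw [card_adj_inl_pred, card_adj_inl_pred]
    simp only [bipCol, Sum.elim_inr]
    rw [hl b hdb i, hl b hdb j]
  | inr y =>
    rw [card_adj_inr_pred, card_adj_inr_pred]
    simp only [bipCol, Sum.elim_inl]
    rw [hl a hda i, hl a hda j]

lemma nb_prod_fst {α β : Type*} (G : SimpleGraph α) (H : SimpleGraph β) (k : ℕ)
    (f : α → Fin (2*k+1)) (hf : NBColoring G k f) :
    NBColoring (directProd G H) k (fun u => f u.1) := by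
  intro v i j
  rw [card_adj_prod_fst G H v (fun u1 => f u1 = i),
    card_adj_prod_fst G H v (fun u1 => f u1 = j), hf v.1 i j]

lemma nb_prod_snd {α β : Type*} (G : SimpleGraph α) (H : SimpleGraph β) (k : ℕ)
    (f : β → Fin (2*k+1)) (hf : NBColoring H k f) :
    NBColoring (directProd G H) k (fun u => f u.2) := by
  intro v i j
  rw [card_adj_prod_snd G H v (fun u2 => f u2 = i),
    card_adj_prod_snd G H v (fun u2 => f u2 = j), hf v.2 i j]

theorem stmt9 (k a b c d : ℕ) (hk : 1 ≤ k) (hprime : Nat.Prime (2*k+1))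
    (ha : 0 < a) (hb : 0 < b) (hc : 0 < c) (hd : 0 < d) :
    (∃ col : (Fin a ⊕ Fin b) × (Fin c ⊕ Fin d) → Fin (2*k+1),
      NBColoring (directProd (completeBipartiteGraph (Fin a) (Fin b))
        (completeBipartiteGraph (Fin c) (Fin d))) k col) ↔
    (((2*k+1) ∣ a ∧ (2*k+1) ∣ b) ∨ ((2*k+1) ∣ c ∧ (2*k+1) ∣ d)) := by
  constructor
  · rintro ⟨col, hcol⟩
    have x0 : Fin a := ⟨0, ha⟩
    have y0 : Fin b := ⟨0, hb⟩
    have z0 : Fin c := ⟨0, hc⟩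
    have w0 : Fin d := ⟨0, hd⟩
    have hbd : (2*k+1) ∣ b * d := by
      have := nb_dvd_degree _ k col hcol (Sum.inl x0, Sum.inl z0)
      rwa [card_deg_prod, card_adj_inl, card_adj_inl, Fintype.card_fin,
        Fintype.card_fin] at this
    have hbc : (2*k+1) ∣ b * c := by
      have := nb_dvd_degree _ k col hcol (Sum.inl x0, Sum.inr w0)
      rwa [card_deg_prod, card_adj_inl, card_adj_inr, Fintype.card_fin,
        Fintype.card_fin] at this
    have had : (2*k+1) ∣ a * d := by
      have := nb_dvd_degree _ k col hcol (Sum.inr y0, Sum.inl z0)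
      rwa [card_deg_prod, card_adj_inr, card_adj_inl, Fintype.card_fin,
        Fintype.card_fin] at this
    have hac : (2*k+1) ∣ a * c := by
      have := nb_dvd_degree _ k col hcol (Sum.inr y0, Sum.inr w0)
      rwa [card_deg_prod, card_adj_inr, card_adj_inr, Fintype.card_fin,
        Fintype.card_fin] at this
    have h1 := hprime.dvd_mul.mp hbd
    have h2 := hprime.dvd_mul.mp hbc
    have h3 := hprime.dvd_mul.mp had
    have h4 := hprime.dvd_mul.mp hac
    tauto
  · rintro (⟨h1, h2⟩ | ⟨h1, h2⟩)
    · exact ⟨fun u => bipCol a b (2*k+1) (by omega) u.1,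
        nb_prod_fst _ _ k _ (bip_nb k a b h1 h2)⟩
    · exact ⟨fun u => bipCol c d (2*k+1) (by omega) u.2,
        nb_prod_snd _ _ k _ (bip_nb k c d h1 h2)⟩
end

section
/- If graphs G and H both admit (2k+1)-neighborhood balanced colorings, then the Cartesian product G □ H admits a (2k+1)-neighborhood balanced coloring. -/
theorem stmt10 {α β : Type*} [Fintype α] [Fintype β]
    (G : SimpleGraph α) (H : SimpleGraph β) (k : ℕ) (hk : 1 ≤ k)
    (hG : ∃ c : α → Fin (2*k+1), NBColoring G k c)
    (hH : ∃ c : β → Fin (2*k+1), NBColoring H k c) :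
    ∃ c : α × β → Fin (2*k+1), NBColoring (G.boxProd H) k c := by
  classical
  obtain ⟨cG, hG⟩ := hG
  obtain ⟨cH, hH⟩ := hH
  refine ⟨fun p => cG p.1 + cH p.2, ?_⟩
  intro v i j
  have key : ∀ m : Fin (2*k+1),
      Nat.card {w : α × β // (G.boxProd H).Adj v w ∧ cG w.1 + cH w.2 = m}
        = Nat.card {a : α // G.Adj v.1 a ∧ cG a = m - cH v.2}
          + Nat.card {b : β // H.Adj v.2 b ∧ cH b = m - cG v.1} := by
    intro m
    rw [← Nat.card_sum]
    refine (Nat.card_congr (Equiv.ofBijective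
      (fun x : {a : α // G.Adj v.1 a ∧ cG a = m - cH v.2} ⊕
               {b : β // H.Adj v.2 b ∧ cH b = m - cG v.1} =>
        x.elim
          (fun a => (⟨(a.1, v.2), SimpleGraph.boxProd_adj.mpr (Or.inl ⟨a.2.1, rfl⟩),
            by rw [a.2.2]; simp⟩ :
            {w : α × β // (G.boxProd H).Adj v w ∧ cG w.1 + cH w.2 = m}))
          (fun b => ⟨(v.1, b.1), SimpleGraph.boxProd_adj.mpr (Or.inr ⟨b.2.1, rfl⟩),
            by rw [b.2.2]; simp⟩))
      ⟨?_, ?_⟩)).symm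
    · rintro (⟨a, ha⟩ | ⟨b, hb⟩) (⟨a', ha'⟩ | ⟨b', hb'⟩) h <;>
        simp only [Sum.elim_inl, Sum.elim_inr, Subtype.mk.injEq, Prod.mk.injEq] at h
      · simp [h.1]
      · exfalso; have := ha.1; rw [h.1] at this; exact G.irrefl this
      · exfalso; have := hb.1; rw [h.2] at this; exact H.irrefl this
      · simp [h.2]
    · rintro ⟨w, hadj, hc⟩
      rcases SimpleGraph.boxProd_adj.mp hadj with ⟨h1, h2⟩ | ⟨h1, h2⟩
      · refine ⟨Sum.inl ⟨w.1, h1, ?_⟩, ?_⟩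
        · rw [eq_sub_iff_add_eq, h2]; exact hc
        · refine Subtype.ext ?_
          show (w.1, v.2) = w
          rw [h2]
      · refine ⟨Sum.inr ⟨w.2, h1, ?_⟩, ?_⟩
        · rw [eq_sub_iff_add_eq, h2]; exact (add_comm (cH w.2) (cG w.1)).trans hc
        · refine Subtype.ext ?_
          show (v.1, w.2) = w
          rw [h2]
  rw [key i, key j, hG v.1 (i - cH v.2) (j - cH v.2), hH v.2 (i - cG v.1) (j - cG v.1)]
end

section
/- If graphs G and H both admit (2k+1)-neighborhood balanced colorings, then the strong product G ⊠ H admits a (2k+1)-neighborhood balanced coloring. -/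
/-- Strong product of simple graphs. -/
def strongProd {α β : Type*} (G : SimpleGraph α) (H : SimpleGraph β) : SimpleGraph (α × β) where
  Adj x y := (x.1 = y.1 ∧ H.Adj x.2 y.2) ∨ (x.2 = y.2 ∧ G.Adj x.1 y.1) ∨
    (G.Adj x.1 y.1 ∧ H.Adj x.2 y.2)
  symm := by
    constructor
    rintro x y (⟨h1, h2⟩ | ⟨h1, h2⟩ | ⟨h1, h2⟩)
    · exact Or.inl ⟨h1.symm, h2.symm⟩
    · exact Or.inr (Or.inl ⟨h1.symm, h2.symm⟩)
    · exact Or.inr (Or.inr ⟨h1.symm, h2.symm⟩)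
  loopless := by
    constructor
    rintro x (⟨_, h⟩ | ⟨_, h⟩ | ⟨h, _⟩)
    · exact H.irrefl h
    · exact G.irrefl h
    · exact G.irrefl h

open scoped Classical in
lemma count_eq {V : Type*} [Fintype V] {G : SimpleGraph V} {k : ℕ} {c : V → Fin (2*k+1)}
    (h : NBColoring G k c) (v : V) (t i j : Fin (2*k+1)) :
    (∑ u : V, if G.Adj v u ∧ c u + t = i then 1 else 0) =
    (∑ u : V, if G.Adj v u ∧ c u + t = j then 1 else 0) := by
  have key : ∀ m : Fin (2*k+1), (∑ u : V, if G.Adj v u ∧ c u + t = m then 1 else 0)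
      = Nat.card {u : V // G.Adj v u ∧ c u = m - t} := by
    intro m
    rw [Nat.card_eq_fintype_card, Fintype.card_subtype, Finset.card_filter]
    refine Finset.sum_congr rfl fun u _ => ?_
    congr 1
    rw [eq_iff_iff]
    constructor
    · rintro ⟨h1, h2⟩; exact ⟨h1, by rw [← h2]; abel⟩
    · rintro ⟨h1, h2⟩; exact ⟨h1, by rw [h2]; abel⟩
  rw [key, key, h v (i - t) (j - t)]

lemma if_split (A B C E : Prop) [Decidable A] [Decidable B] [Decidable C] [Decidable E] (hAB : ¬(A ∧ B)) (hAC : ¬(A ∧ C)) (hBC : ¬(B ∧ C)) :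
    (if (A ∨ B ∨ C) ∧ E then (1:ℕ) else 0) =
      (if A ∧ E then 1 else 0) + (if B ∧ E then 1 else 0) + (if C ∧ E then 1 else 0) := by
  split_ifs <;> first | rfl | tauto

theorem stmt11 {α β : Type*} [Fintype α] [Fintype β]
    (G : SimpleGraph α) (H : SimpleGraph β) (k : ℕ) (hk : 1 ≤ k)
    (hG : ∃ c : α → Fin (2*k+1), NBColoring G k c)
    (hH : ∃ c : β → Fin (2*k+1), NBColoring H k c) :
    ∃ c : α × β → Fin (2*k+1), NBColoring (strongProd G H) k c := by
  classical
  obtain ⟨cG, hG⟩ := hG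
  obtain ⟨cH, hH⟩ := hH
  refine ⟨fun p => cG p.1 + cH p.2, ?_⟩
  rintro ⟨a, b⟩ i j
  have key : ∀ m : Fin (2*k+1),
      Nat.card {p : α × β // (strongProd G H).Adj (a, b) p ∧ cG p.1 + cH p.2 = m}
      = (∑ x : α, ∑ y : β, if (a = x ∧ H.Adj b y) ∧ cG x + cH y = m then 1 else 0)
      + (∑ x : α, ∑ y : β, if (b = y ∧ G.Adj a x) ∧ cG x + cH y = m then 1 else 0)
      + (∑ x : α, ∑ y : β, if (G.Adj a x ∧ H.Adj b y) ∧ cG x + cH y = m then 1 else 0) := by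
    intro m
    rw [Nat.card_eq_fintype_card, Fintype.card_subtype, Finset.card_filter,
      Fintype.sum_prod_type]
    rw [← Finset.sum_add_distrib, ← Finset.sum_add_distrib]
    refine Finset.sum_congr rfl fun x _ => ?_
    rw [← Finset.sum_add_distrib, ← Finset.sum_add_distrib]
    refine Finset.sum_congr rfl fun y _ => ?_
    have hadj : (strongProd G H).Adj (a, b) (x, y) ↔
        ((a = x ∧ H.Adj b y) ∨ (b = y ∧ G.Adj a x) ∨ (G.Adj a x ∧ H.Adj b y)) := Iff.rfl
    simp only [hadj]
    exact if_split (a = x ∧ H.Adj b y) (b = y ∧ G.Adj a x) (G.Adj a x ∧ H.Adj b y) (cG x + cH y = m)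
      (fun h => G.irrefl (v := a) (h.1.1 ▸ h.2.2))
      (fun h => G.irrefl (v := a) (h.1.1 ▸ h.2.1))
      (fun h => H.irrefl (v := b) (h.1.1 ▸ h.2.2))
  rw [key i, key j]
  congr 1
  congr 1
  · -- first term
    refine Finset.sum_congr rfl fun x _ => ?_
    by_cases hx : a = x
    · subst hx
      calc (∑ y : β, if (a = a ∧ H.Adj b y) ∧ cG a + cH y = i then 1 else 0)
          = ∑ y : β, if H.Adj b y ∧ cH y + cG a = i then 1 else 0 := by
            refine Finset.sum_congr rfl fun y _ => ?_
            congr 1; rw [eq_iff_iff]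
            constructor
            · rintro ⟨⟨_, h1⟩, h2⟩; exact ⟨h1, by rw [← h2]; abel⟩
            · rintro ⟨h1, h2⟩; exact ⟨⟨rfl, h1⟩, by rw [← h2]; abel⟩
        _ = ∑ y : β, if H.Adj b y ∧ cH y + cG a = j then 1 else 0 := count_eq hH b (cG a) i j
        _ = ∑ y : β, if (a = a ∧ H.Adj b y) ∧ cG a + cH y = j then 1 else 0 := by
            refine Finset.sum_congr rfl fun y _ => ?_
            congr 1; rw [eq_iff_iff]
            constructor
            · rintro ⟨h1, h2⟩; exact ⟨⟨rfl, h1⟩, by rw [← h2]; abel⟩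
            · rintro ⟨⟨_, h1⟩, h2⟩; exact ⟨h1, by rw [← h2]; abel⟩
    · rw [Finset.sum_eq_zero fun y _ => if_neg fun h => hx h.1.1,
        Finset.sum_eq_zero fun y _ => if_neg fun h => hx h.1.1]
  · -- second term
    rw [Finset.sum_comm, Finset.sum_comm (f := fun x y =>
      if (b = y ∧ G.Adj a x) ∧ cG x + cH y = j then 1 else 0)]
    refine Finset.sum_congr rfl fun y _ => ?_
    by_cases hy : b = y
    · subst hy
      calc (∑ x : α, if (b = b ∧ G.Adj a x) ∧ cG x + cH b = i then 1 else 0)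
          = ∑ x : α, if G.Adj a x ∧ cG x + cH b = i then 1 else 0 := by
            refine Finset.sum_congr rfl fun x _ => ?_
            congr 1; rw [eq_iff_iff]
            constructor
            · rintro ⟨⟨_, h1⟩, h2⟩; exact ⟨h1, h2⟩
            · rintro ⟨h1, h2⟩; exact ⟨⟨rfl, h1⟩, h2⟩
        _ = ∑ x : α, if G.Adj a x ∧ cG x + cH b = j then 1 else 0 := count_eq hG a (cH b) i j
        _ = ∑ x : α, if (b = b ∧ G.Adj a x) ∧ cG x + cH b = j then 1 else 0 := by
            refine Finset.sum_congr rfl fun x _ => ?_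
            congr 1; rw [eq_iff_iff]
            constructor
            · rintro ⟨h1, h2⟩; exact ⟨⟨rfl, h1⟩, h2⟩
            · rintro ⟨⟨_, h1⟩, h2⟩; exact ⟨h1, h2⟩
    · rw [Finset.sum_eq_zero fun x _ => if_neg fun h => hy h.1.1,
        Finset.sum_eq_zero fun x _ => if_neg fun h => hy h.1.1]
  · -- third term
    refine Finset.sum_congr rfl fun x _ => ?_
    by_cases hx : G.Adj a x
    · calc (∑ y : β, if (G.Adj a x ∧ H.Adj b y) ∧ cG x + cH y = i then 1 else 0)
          = ∑ y : β, if H.Adj b y ∧ cH y + cG x = i then 1 else 0 := by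
            refine Finset.sum_congr rfl fun y _ => ?_
            congr 1; rw [eq_iff_iff]
            constructor
            · rintro ⟨⟨_, h1⟩, h2⟩; exact ⟨h1, by rw [← h2]; abel⟩
            · rintro ⟨h1, h2⟩; exact ⟨⟨hx, h1⟩, by rw [← h2]; abel⟩
        _ = ∑ y : β, if H.Adj b y ∧ cH y + cG x = j then 1 else 0 := count_eq hH b (cG x) i j
        _ = ∑ y : β, if (G.Adj a x ∧ H.Adj b y) ∧ cG x + cH y = j then 1 else 0 := by
            refine Finset.sum_congr rfl fun y _ => ?_
            congr 1; rw [eq_iff_iff]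
            constructor
            · rintro ⟨h1, h2⟩; exact ⟨⟨hx, h1⟩, by rw [← h2]; abel⟩
            · rintro ⟨⟨_, h1⟩, h2⟩; exact ⟨h1, by rw [← h2]; abel⟩
    · rw [Finset.sum_eq_zero fun y _ => if_neg fun h => hx h.1.1,
        Finset.sum_eq_zero fun y _ => if_neg fun h => hx h.1.1]
end

section
/- If G admits a (2k+1)-neighborhood balanced coloring with all color classes of equal size, and H admits a (2k+1)-neighborhood balanced coloring with all color classes of equal size, then the join G + H admits a (2k+1)-neighborhood balanced coloring. -/
/-- Join of two simple graphs on disjoint vertex sets. -/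
def joinG {α β : Type*} (G : SimpleGraph α) (H : SimpleGraph β) : SimpleGraph (α ⊕ β) where
  Adj x y :=
    match x, y with
    | Sum.inl a, Sum.inl b => G.Adj a b
    | Sum.inr a, Sum.inr b => H.Adj a b
    | _, _ => True
  symm := by
    constructor
    rintro (a | a) (b | b) h
    · exact h.symm
    · trivial
    · trivial
    · exact h.symm
  loopless := by
    constructor
    rintro (a | a) h
    · exact G.irrefl h
    · exact H.irrefl h

theorem stmt12 {α β : Type*} [Fintype α] [Fintype β]
    (G : SimpleGraph α) (H : SimpleGraph β) (k : ℕ) (hk : 1 ≤ k)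
    (hG : ∃ c : α → Fin (2*k+1), NBColoring G k c ∧
      ∀ i j : Fin (2*k+1), Nat.card {v : α // c v = i} = Nat.card {v : α // c v = j})
    (hH : ∃ c : β → Fin (2*k+1), NBColoring H k c ∧
      ∀ i j : Fin (2*k+1), Nat.card {v : β // c v = i} = Nat.card {v : β // c v = j}) :
    ∃ c : α ⊕ β → Fin (2*k+1), NBColoring (joinG G H) k c := by
  obtain ⟨cG, hG1, hG2⟩ := hG
  obtain ⟨cH, hH1, hH2⟩ := hH
  refine ⟨Sum.elim cG cH, ?_⟩
  have key : ∀ (v : α ⊕ β) (i : Fin (2*k+1)),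
      Nat.card {u : α ⊕ β // (joinG G H).Adj v u ∧ Sum.elim cG cH u = i} =
      Nat.card {a : α // (joinG G H).Adj v (Sum.inl a) ∧ cG a = i} +
      Nat.card {b : β // (joinG G H).Adj v (Sum.inr b) ∧ cH b = i} := by
    intro v i
    rw [Nat.card_congr (Equiv.subtypeSum
      (p := fun u => (joinG G H).Adj v u ∧ Sum.elim cG cH u = i)), Nat.card_sum]
    rfl
  rintro (a | b) i j
  · rw [key, key]
    have h1 : ∀ i, Nat.card {x : α // (joinG G H).Adj (Sum.inl a) (Sum.inl x) ∧ cG x = i}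
        = Nat.card {x : α // G.Adj a x ∧ cG x = i} := fun _ => rfl
    have h2 : ∀ i, Nat.card {x : β // (joinG G H).Adj (Sum.inl a) (Sum.inr x) ∧ cH x = i}
        = Nat.card {x : β // cH x = i} := by
      intro i
      refine Nat.card_congr (Equiv.subtypeEquivRight fun x => ?_)
      simp [joinG]
    rw [h1, h1, h2, h2, hG1 a i j, hH2 i j]
  · rw [key, key]
    have h1 : ∀ i, Nat.card {x : β // (joinG G H).Adj (Sum.inr b) (Sum.inr x) ∧ cH x = i}
        = Nat.card {x : β // H.Adj b x ∧ cH x = i} := fun _ => rfl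
    have h2 : ∀ i, Nat.card {x : α // (joinG G H).Adj (Sum.inr b) (Sum.inl x) ∧ cG x = i}
        = Nat.card {x : α // cG x = i} := by
      intro i
      refine Nat.card_congr (Equiv.subtypeEquivRight fun x => ?_)
      simp [joinG]
    rw [h1, h1, h2, h2, hH1 b i j, hG2 i j]
end

section
/- Let n ≡ 0 (mod 4k+2) and let a_1 < a_2 < … < a_{2k+1} be positive integers with a_{2k+1} < n/2 such that the common residue p of all consecutive differences a_{i+1} − a_i modulo 2k+1 satisfies gcd(p, 2k+1) = 1 (p ∈ {1,…,2k}, with 2k+1 prime). Then the circulant graph C_n(a_1, …, a_{2k+1}) admits a (2k+1)-neighborhood balanced coloring. -/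
/-- Circulant graph on `ZMod n` with connection values `a i`. -/
def circulant (n : ℕ) {m : ℕ} (a : Fin m → ℕ) : SimpleGraph (ZMod n) where
  Adj u w := u ≠ w ∧ ∃ i : Fin m, w - u = (a i : ZMod n) ∨ u - w = (a i : ZMod n)
  symm := ⟨by
    rintro u w ⟨hne, i, h | h⟩
    · exact ⟨hne.symm, i, Or.inr h⟩
    · exact ⟨hne.symm, i, Or.inl h⟩⟩
  loopless := ⟨fun u h => h.1 rfl⟩

theorem stmt14 (k n p : ℕ) (hk : 1 ≤ k) (hprime : Nat.Prime (2*k+1)) (hn : 0 < n)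
    (hdvd : (4*k+2) ∣ n) (a : Fin (2*k+1) → ℕ) (ha : StrictMono a) (hpos : 0 < a 0)
    (hlt : 2 * a (Fin.last (2*k)) < n) (hp1 : 1 ≤ p) (hp2 : p ≤ 2*k)
    (hdiff : ∀ i : Fin (2*k), a i.succ ≡ a i.castSucc + p [MOD 2*k+1]) :
    ∃ c : ZMod n → Fin (2*k+1), NBColoring (circulant n a) k c := by
  classical
  haveI : Fact (Nat.Prime (2*k+1)) := ⟨hprime⟩
  haveI : NeZero n := ⟨hn.ne'⟩
  haveI : NeZero (2*k+1) := ⟨by omega⟩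
  have hmn : (2*k+1) ∣ n := dvd_trans ⟨2, by ring⟩ hdvd
  -- bounds on the a i
  have hbound : ∀ i : Fin (2*k+1), 0 < a i ∧ 2 * a i < n := by
    intro i
    refine ⟨lt_of_lt_of_le hpos (ha.monotone (Fin.zero_le i)), ?_⟩
    have := ha.monotone (Fin.le_last i); omega
  have hane : ∀ i : Fin (2*k+1), (a i : ZMod n) ≠ 0 := by
    intro i h
    have hd := (ZMod.natCast_eq_zero_iff (a i) n).mp h
    have h1 := (hbound i).1
    have h2 := (hbound i).2
    have := Nat.le_of_dvd h1 hd
    omega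
  have hsumne : ∀ i j : Fin (2*k+1), ((a i : ZMod n)) + (a j : ZMod n) ≠ 0 := by
    intro i j h
    have : ((a i + a j : ℕ) : ZMod n) = 0 := by push_cast; exact h
    have hd := (ZMod.natCast_eq_zero_iff (a i + a j) n).mp this
    have h1 := (hbound i).1
    have h2 := (hbound i).2
    have h3 := (hbound j).1
    have h4 := (hbound j).2
    have := Nat.le_of_dvd (by omega) hd
    omega
  -- the map to colors
  let φ : ZMod n →+* ZMod (2*k+1) := ZMod.castHom hmn (ZMod (2*k+1))
  -- arithmetic progression of residues
  have key : ∀ i : Fin (2*k+1),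
      (a i : ZMod (2*k+1)) = (a 0 : ZMod (2*k+1)) + (i.val : ZMod (2*k+1)) * (p : ZMod (2*k+1)) := by
    intro i
    induction i using Fin.induction with
    | zero => simp
    | succ i ih =>
      have h := (ZMod.natCast_eq_natCast_iff _ _ _).mpr (hdiff i)
      push_cast at h
      rw [h, ih]
      push_cast [Fin.val_succ, Fin.coe_castSucc]
      ring
  have hpne : (p : ZMod (2*k+1)) ≠ 0 := by
    intro h
    have hd := (ZMod.natCast_eq_zero_iff p (2*k+1)).mp h
    have := Nat.le_of_dvd (by omega) hd
    omega
  -- injectivity of residues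
  have finj : Function.Injective (fun i : Fin (2*k+1) => (a i : ZMod (2*k+1))) := by
    intro i j hij
    have hij' : (a 0 : ZMod (2*k+1)) + (i.val : ZMod (2*k+1)) * p = (a 0 : ZMod (2*k+1)) + (j.val : ZMod (2*k+1)) * p := by
      rw [← key i, ← key j]; exact hij
    clear hij
    rename' hij' => hij
    have h2 : (i.val : ZMod (2*k+1)) * (p : ZMod (2*k+1))
        = (j.val : ZMod (2*k+1)) * (p : ZMod (2*k+1)) := by
      exact add_left_cancel hij
    have h3 : (i.val : ZMod (2*k+1)) = (j.val : ZMod (2*k+1)) := mul_right_cancel₀ hpne h2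
    have h4 : (i.val : ZMod (2*k+1)).val = (j.val : ZMod (2*k+1)).val := by rw [h3]
    rw [ZMod.val_cast_of_lt i.isLt, ZMod.val_cast_of_lt j.isLt] at h4
    exact Fin.ext h4
  have fbij : Function.Bijective (fun i : Fin (2*k+1) => (a i : ZMod (2*k+1))) := by
    rw [Fintype.bijective_iff_injective_and_card]
    exact ⟨finj, by rw [ZMod.card, Fintype.card_fin]⟩
  -- color equivalence
  let e : ZMod (2*k+1) ≃ Fin (2*k+1) := Fintype.equivFinOfCardEq (ZMod.card (2*k+1))
  refine ⟨fun v => e (φ v), ?_⟩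
  -- main counting claim
  have count : ∀ (v : ZMod n) (t : ZMod (2*k+1)),
      Nat.card {u : ZMod n // (circulant n a).Adj v u ∧ φ u = t} = 2 := by
    intro v t
    obtain ⟨ip, hip⟩ := fbij.2 (t - φ v)
    obtain ⟨im, him⟩ := fbij.2 (φ v - t)
    simp only at hip him
    set up : ZMod n := v + (a ip : ZMod n) with hup
    set um : ZMod n := v - (a im : ZMod n) with hum
    have hφa : ∀ i : Fin (2*k+1), φ ((a i : ZMod n)) = (a i : ZMod (2*k+1)) := by
      intro i; simp [φ]
    have hupum : up ≠ um := by
      intro h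
      apply hsumne ip im
      have : (a ip : ZMod n) + (a im : ZMod n) = (v + a ip) - (v - a im) := by ring
      rw [this, ← hup, ← hum, h, sub_self]
    have hset : {u : ZMod n | (circulant n a).Adj v u ∧ φ u = t} = {up, um} := by
      ext u
      simp only [Set.mem_setOf_eq, Set.mem_insert_iff, Set.mem_singleton_iff]
      constructor
      · rintro ⟨⟨hne, s, hs | hs⟩, hφ⟩
        · left
          have hu : u = v + (a s : ZMod n) := by
            have := hs; rw [sub_eq_iff_eq_add] at this; rw [this]; ring
          have : (a s : ZMod (2*k+1)) = t - φ v := by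
            rw [hu] at hφ
            rw [map_add, hφa] at hφ
            linear_combination hφ
          have : s = ip := finj (by
            show ((a s : ℕ) : ZMod (2*k+1)) = ((a ip : ℕ) : ZMod (2*k+1))
            rw [this, hip])
          rw [hu, this]
        · right
          have hu : u = v - (a s : ZMod n) := by
            have := hs; rw [sub_eq_iff_eq_add] at this
            rw [eq_comm, sub_eq_iff_eq_add, this]; ring
          have : (a s : ZMod (2*k+1)) = φ v - t := by
            rw [hu] at hφ
            rw [map_sub, hφa] at hφ
            linear_combination -hφ
          have : s = im := finj (by
            show ((a s : ℕ) : ZMod (2*k+1)) = ((a im : ℕ) : ZMod (2*k+1))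
            rw [this, him])
          rw [hu, this]
      · rintro (rfl | rfl)
        · refine ⟨⟨?_, ip, Or.inl (by rw [hup]; ring)⟩, ?_⟩
          · intro h
            apply hane ip
            have : (a ip : ZMod n) = up - v := by rw [hup]; ring
            rw [this, ← h, sub_self]
          · rw [hup, map_add, hφa, hip]; ring
        · refine ⟨⟨?_, im, Or.inr (by rw [hum]; ring)⟩, ?_⟩
          · intro h
            apply hane im
            have : (a im : ZMod n) = v - um := by rw [hum]; ring
            rw [this, h, sub_self]
          · rw [hum, map_sub, hφa, him]; ring
    have : Nat.card {u : ZMod n // (circulant n a).Adj v u ∧ φ u = t}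
        = Nat.card ({up, um} : Set (ZMod n)) := by
      rw [← hset]; rfl
    rw [this, Nat.card_coe_set_eq, Set.ncard_pair hupum]
  intro v i j
  have hc : ∀ i : Fin (2*k+1),
      Nat.card {u : ZMod n // (circulant n a).Adj v u ∧ e (φ u) = i} = 2 := by
    intro i
    have heq : Nat.card {u : ZMod n // (circulant n a).Adj v u ∧ e (φ u) = i}
        = Nat.card {u : ZMod n // (circulant n a).Adj v u ∧ φ u = e.symm i} := by
      apply Nat.card_congr
      apply Equiv.subtypeEquivRight
      intro u
      constructor
      · rintro ⟨h1, h2⟩; exact ⟨h1, by rw [← h2, Equiv.symm_apply_apply]⟩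
      · rintro ⟨h1, h2⟩; exact ⟨h1, by rw [h2, Equiv.apply_symm_apply]⟩
    exact heq.trans (count v (e.symm i))
  rw [hc i, hc j]
end

section
/- Every finite simple graph is an induced subgraph of some graph admitting a (2k+1)-neighborhood balanced coloring. -/
theorem stmt15 {V : Type} [Fintype V] (G : SimpleGraph V) (k : ℕ) (hk : 1 ≤ k) :
    ∃ (W : Type) (_ : Fintype W) (Hg : SimpleGraph W) (f : V ↪ W),
      (∀ u v : V, Hg.Adj (f u) (f v) ↔ G.Adj u v) ∧
      ∃ c : W → Fin (2*k+1), NBColoring Hg k c := by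
  refine ⟨V × Fin (2*k+1), inferInstance,
    { Adj := fun p q => G.Adj p.1 q.1,
      symm := ⟨fun p q h => G.adj_symm h⟩,
      loopless := ⟨fun p h => G.irrefl h⟩ },
    ⟨fun v => (v, 0), fun a b h => congrArg Prod.fst h⟩,
    fun u v => Iff.rfl, fun p => p.2, ?_⟩
  intro v i j
  have e : ∀ m : Fin (2*k+1),
      {u : V × Fin (2*k+1) // G.Adj v.1 u.1 ∧ u.2 = m} ≃ {u : V // G.Adj v.1 u} :=
    fun m => ⟨fun p => ⟨p.1.1, p.2.1⟩, fun u => ⟨(u.1, m), u.2, rfl⟩,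
      fun p => by obtain ⟨⟨a, b⟩, h1, h2⟩ := p; subst h2; rfl,
      fun u => rfl⟩
  exact (Nat.card_congr (e i)).trans (Nat.card_congr (e j)).symm
end

section
/- For every graph G, the graph H with vertex set V(G) × Fin(2k+1) and edges {(u,p),(v,q)} whenever uv ∈ E(G) (for any p, q, including p = q) admits a (2k+1)-neighborhood balanced coloring, obtained by coloring (v, j) with color j; moreover G is an induced subgraph of H. -/
/-- The blow-up of `G` obtained by replacing each vertex by `2k+1` copies and each
edge by a complete bipartite graph between the corresponding copies. -/
def blowup {V : Type*} (G : SimpleGraph V) (k : ℕ) : SimpleGraph (V × Fin (2*k+1)) where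
  Adj x y := G.Adj x.1 y.1
  symm := ⟨fun _ _ h => h.symm⟩
  loopless := ⟨fun _ h => G.irrefl h⟩

def nbEquiv {V : Type*} (G : SimpleGraph V) (k : ℕ) (x : V × Fin (2*k+1))
    (i : Fin (2*k+1)) :
    {u : V × Fin (2*k+1) // (blowup G k).Adj x u ∧ u.2 = i} ≃
      {u : V // G.Adj x.1 u} where
  toFun u := ⟨u.1.1, u.2.1⟩
  invFun u := ⟨(u.1, i), u.2, rfl⟩
  left_inv := by rintro ⟨⟨a, b⟩, h, rfl⟩; rfl
  right_inv := by rintro ⟨a, h⟩; rfl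

theorem stmt16 {V : Type*} [Fintype V] (G : SimpleGraph V) (k : ℕ) (hk : 1 ≤ k) :
    NBColoring (blowup G k) k (fun x => x.2) ∧
    ∃ f : V ↪ V × Fin (2*k+1),
      ∀ u v : V, (blowup G k).Adj (f u) (f v) ↔ G.Adj u v := by
  constructor
  · intro v i j
    rw [Nat.card_congr (nbEquiv G k v i), Nat.card_congr (nbEquiv G k v j)]
  · exact ⟨⟨fun v => (v, 0), fun a b h => (Prod.mk.injEq _ _ _ _ ▸ h).1⟩,
      fun u v => Iff.rfl⟩
end

section
/- Suppose G admits a (2k+1)-neighborhood balanced coloring with vertices v_1,…,v_{2k+1} and v'_1,…,v'_{2k+1} where v_i and v'_i both have color i. Form G' by adding new vertices u, a_1,…,a_{2k}, a'_1,…,a'_{2k}, where u is adjacent to all v_i and v'_i, each a_i is adjacent to v_1,…,v_{2k+1}, and each a'_i is adjacent to v'_1,…,v'_{2k+1}; color u with color 2k+1 and a_i, a'_i with color i. Then this coloring of G' is a (2k+1)-neighborhood balanced coloring. -/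
/-- The `(4k+1)`-vertex addition: add a vertex `u` (the `Unit`) adjacent to all
`v i` and `v' i`, vertices `a i` (first `Fin (2*k)` factor) adjacent to all `v j`,
and vertices `a' i` (second `Fin (2*k)` factor) adjacent to all `v' j`. -/
def vertexAddition {V : Type*} (G : SimpleGraph V) (k : ℕ) (v v' : Fin (2*k+1) → V) :
    SimpleGraph (V ⊕ (Unit ⊕ Fin (2*k) ⊕ Fin (2*k))) where
  Adj x y :=
    match x, y with
    | Sum.inl a, Sum.inl b => G.Adj a b
    | Sum.inl a, Sum.inr (Sum.inl _) => (∃ i, a = v i) ∨ (∃ i, a = v' i)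
    | Sum.inl a, Sum.inr (Sum.inr (Sum.inl _)) => ∃ i, a = v i
    | Sum.inl a, Sum.inr (Sum.inr (Sum.inr _)) => ∃ i, a = v' i
    | Sum.inr (Sum.inl _), Sum.inl a => (∃ i, a = v i) ∨ (∃ i, a = v' i)
    | Sum.inr (Sum.inr (Sum.inl _)), Sum.inl a => ∃ i, a = v i
    | Sum.inr (Sum.inr (Sum.inr _)), Sum.inl a => ∃ i, a = v' i
    | Sum.inr _, Sum.inr _ => False
  symm := ⟨by
    rintro (a | (u | (i | i))) (b | (u' | (j | j))) h <;>
      first | exact h.symm | exact h | exact h.elim⟩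
  loopless := ⟨by
    rintro (a | (u | (i | i))) h
    · exact G.irrefl h
    · exact h.elim
    · exact h.elim
    · exact h.elim⟩

lemma card_subtype_sum {α β : Type*} [Finite α] [Finite β] (p : α ⊕ β → Prop) :
    Nat.card {x : α ⊕ β // p x}
      = Nat.card {a : α // p (Sum.inl a)} + Nat.card {b : β // p (Sum.inr b)} := by
  rw [← Nat.card_sum]
  exact Nat.card_congr Equiv.subtypeSum

lemma nc_one {γ : Type*} {p : γ → Prop} (x : γ) (hx : p x) (huniq : ∀ y, p y → y = x) :
    Nat.card {y : γ // p y} = 1 := by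
  have : Unique {y : γ // p y} :=
    ⟨⟨⟨x, hx⟩⟩, by rintro ⟨y, hy⟩; exact Subtype.ext (huniq y hy)⟩
  exact Nat.card_unique

lemma nc_zero {γ : Type*} {p : γ → Prop} (h : ∀ y, ¬ p y) : Nat.card {y : γ // p y} = 0 := by
  have : IsEmpty {y : γ // p y} := ⟨fun x => h x.1 x.2⟩
  exact Nat.card_of_isEmpty

theorem stmt18 {V : Type*} [Fintype V] (G : SimpleGraph V) (k : ℕ) (hk : 1 ≤ k)
    (c : V → Fin (2*k+1)) (h : NBColoring G k c)
    (v v' : Fin (2*k+1) → V) (hv : ∀ i, c (v i) = i) (hv' : ∀ i, c (v' i) = i)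
    (hne : ∀ i j, v i ≠ v' j) :
    NBColoring (vertexAddition G k v v') k
      (Sum.elim c (Sum.elim (fun _ => Fin.last (2*k))
        (Sum.elim Fin.castSucc Fin.castSucc))) := by
  classical
  set G' := vertexAddition G k v v' with hG'
  set c' : V ⊕ (Unit ⊕ Fin (2*k) ⊕ Fin (2*k)) → Fin (2*k+1) :=
    Sum.elim c (Sum.elim (fun _ => Fin.last (2*k)) (Sum.elim Fin.castSucc Fin.castSucc))
    with hc'
  intro w i j
  rcases w with a | (u | (m | m))
  · -- old vertex a
    -- the count of new neighbors of each color is the same for every color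
    have key : ∃ e : ℕ,
        (∀ col : Fin (2*k+1),
          Nat.card {b : Unit ⊕ Fin (2*k) ⊕ Fin (2*k) //
            G'.Adj (Sum.inl a) (Sum.inr b) ∧ c' (Sum.inr b) = col} = e) := by
      by_cases hva : ∃ i0, a = v i0
      · have hnva' : ¬ ∃ i0, a = v' i0 := by
          rintro ⟨i1, rfl⟩
          obtain ⟨i0, h0⟩ := hva
          exact hne i0 i1 h0.symm
        refine ⟨1, fun col => ?_⟩
        rw [card_subtype_sum, card_subtype_sum]
        have hS3 : Nat.card {m : Fin (2*k) //
            G'.Adj (Sum.inl a) (Sum.inr (Sum.inr (Sum.inr m)))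
              ∧ c' (Sum.inr (Sum.inr (Sum.inr m))) = col} = 0 :=
          nc_zero fun m hm => hnva' hm.1
        by_cases hlast : col = Fin.last (2*k)
        · have hS1 : Nat.card {u : Unit //
              G'.Adj (Sum.inl a) (Sum.inr (Sum.inl u))
                ∧ c' (Sum.inr (Sum.inl u)) = col} = 1 :=
            nc_one () ⟨Or.inl hva, hlast.symm⟩ (fun y _ => rfl)
          have hS2 : Nat.card {m : Fin (2*k) //
              G'.Adj (Sum.inl a) (Sum.inr (Sum.inr (Sum.inl m)))
                ∧ c' (Sum.inr (Sum.inr (Sum.inl m))) = col} = 0 :=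
            nc_zero fun m hm => (Fin.castSucc_lt_last m).ne (hm.2.trans hlast)
          rw [hS1, hS2, hS3]
        · have hS1 : Nat.card {u : Unit //
              G'.Adj (Sum.inl a) (Sum.inr (Sum.inl u))
                ∧ c' (Sum.inr (Sum.inl u)) = col} = 0 :=
            nc_zero fun y hy => hlast hy.2.symm
          obtain ⟨m0, hm0⟩ := Fin.exists_castSucc_eq.mpr hlast
          have hS2 : Nat.card {m : Fin (2*k) //
              G'.Adj (Sum.inl a) (Sum.inr (Sum.inr (Sum.inl m)))
                ∧ c' (Sum.inr (Sum.inr (Sum.inl m))) = col} = 1 :=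
            nc_one m0 ⟨hva, hm0⟩
              (fun y hy => Fin.castSucc_injective _ (hy.2.trans hm0.symm))
          rw [hS1, hS2, hS3]
      · by_cases hva' : ∃ i0, a = v' i0
        · refine ⟨1, fun col => ?_⟩
          rw [card_subtype_sum, card_subtype_sum]
          have hS2 : Nat.card {m : Fin (2*k) //
              G'.Adj (Sum.inl a) (Sum.inr (Sum.inr (Sum.inl m)))
                ∧ c' (Sum.inr (Sum.inr (Sum.inl m))) = col} = 0 :=
            nc_zero fun m hm => hva hm.1
          by_cases hlast : col = Fin.last (2*k)
          · have hS1 : Nat.card {u : Unit //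
                G'.Adj (Sum.inl a) (Sum.inr (Sum.inl u))
                  ∧ c' (Sum.inr (Sum.inl u)) = col} = 1 :=
              nc_one () ⟨Or.inr hva', hlast.symm⟩ (fun y _ => rfl)
            have hS3 : Nat.card {m : Fin (2*k) //
                G'.Adj (Sum.inl a) (Sum.inr (Sum.inr (Sum.inr m)))
                  ∧ c' (Sum.inr (Sum.inr (Sum.inr m))) = col} = 0 :=
              nc_zero fun m hm => (Fin.castSucc_lt_last m).ne (hm.2.trans hlast)
            rw [hS1, hS2, hS3]
          · have hS1 : Nat.card {u : Unit //
                G'.Adj (Sum.inl a) (Sum.inr (Sum.inl u))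
                  ∧ c' (Sum.inr (Sum.inl u)) = col} = 0 :=
              nc_zero fun y hy => hlast hy.2.symm
            obtain ⟨m0, hm0⟩ := Fin.exists_castSucc_eq.mpr hlast
            have hS3 : Nat.card {m : Fin (2*k) //
                G'.Adj (Sum.inl a) (Sum.inr (Sum.inr (Sum.inr m)))
                  ∧ c' (Sum.inr (Sum.inr (Sum.inr m))) = col} = 1 :=
              nc_one m0 ⟨hva', hm0⟩
                (fun y hy => Fin.castSucc_injective _ (hy.2.trans hm0.symm))
            rw [hS1, hS2, hS3]
        · refine ⟨0, fun col => ?_⟩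
          rw [card_subtype_sum, card_subtype_sum]
          have hS1 : Nat.card {u : Unit //
              G'.Adj (Sum.inl a) (Sum.inr (Sum.inl u))
                ∧ c' (Sum.inr (Sum.inl u)) = col} = 0 :=
            nc_zero fun y hy => hy.1.elim hva hva'
          have hS2 : Nat.card {m : Fin (2*k) //
              G'.Adj (Sum.inl a) (Sum.inr (Sum.inr (Sum.inl m)))
                ∧ c' (Sum.inr (Sum.inr (Sum.inl m))) = col} = 0 :=
            nc_zero fun m hm => hva hm.1
          have hS3 : Nat.card {m : Fin (2*k) //
              G'.Adj (Sum.inl a) (Sum.inr (Sum.inr (Sum.inr m)))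
                ∧ c' (Sum.inr (Sum.inr (Sum.inr m))) = col} = 0 :=
            nc_zero fun m hm => hva' hm.1
          rw [hS1, hS2, hS3]
    have split : ∀ col : Fin (2*k+1),
        Nat.card {x // G'.Adj (Sum.inl a) x ∧ c' x = col}
          = Nat.card {u : V // G.Adj a u ∧ c u = col}
            + Nat.card {b : Unit ⊕ Fin (2*k) ⊕ Fin (2*k) //
                G'.Adj (Sum.inl a) (Sum.inr b) ∧ c' (Sum.inr b) = col} := by
      intro col
      rw [card_subtype_sum]
      congr 1
    obtain ⟨e, he⟩ := key
    rw [split i, split j, he i, he j, h a i j]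
  · -- the unit vertex
    have key : ∀ col : Fin (2*k+1),
        Nat.card {x // G'.Adj (Sum.inr (Sum.inl u)) x ∧ c' x = col} = 2 := by
      intro col
      rw [card_subtype_sum]
      have hR : Nat.card {b : Unit ⊕ Fin (2*k) ⊕ Fin (2*k) //
            G'.Adj (Sum.inr (Sum.inl u)) (Sum.inr b) ∧ c' (Sum.inr b) = col} = 0 :=
        nc_zero fun b hb => hb.1
      have hset : {a : V | ((∃ i, a = v i) ∨ (∃ i, a = v' i)) ∧ c a = col}
          = {v col, v' col} := by
        ext a
        constructor
        · rintro ⟨(⟨i0, rfl⟩ | ⟨i0, rfl⟩), hc⟩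
          · rw [hv i0] at hc; left; rw [hc]
          · rw [hv' i0] at hc; right; rw [hc]; rfl
        · rintro (rfl | rfl)
          · exact ⟨Or.inl ⟨col, rfl⟩, hv col⟩
          · exact ⟨Or.inr ⟨col, rfl⟩, hv' col⟩
      have hL : Nat.card {a : V //
            G'.Adj (Sum.inr (Sum.inl u)) (Sum.inl a) ∧ c' (Sum.inl a) = col} = 2 := by
        have : Nat.card {a : V | ((∃ i, a = v i) ∨ (∃ i, a = v' i)) ∧ c a = col} = 2 := by
          rw [Nat.card_coe_set_eq, hset]
          exact Set.ncard_pair (hne col col)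
        exact this
      rw [hL, hR]
    rw [key i, key j]
  · -- a vertex a_m
    have key : ∀ col : Fin (2*k+1),
        Nat.card {x // G'.Adj (Sum.inr (Sum.inr (Sum.inl m))) x ∧ c' x = col} = 1 := by
      intro col
      rw [card_subtype_sum]
      have hR : Nat.card {b : Unit ⊕ Fin (2*k) ⊕ Fin (2*k) //
            G'.Adj (Sum.inr (Sum.inr (Sum.inl m))) (Sum.inr b) ∧ c' (Sum.inr b) = col} = 0 :=
        nc_zero fun b hb => hb.1
      have hset : {a : V | (∃ i, a = v i) ∧ c a = col} = {v col} := by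
        ext a
        constructor
        · rintro ⟨⟨i0, rfl⟩, hc⟩
          rw [hv i0] at hc; rw [hc]; rfl
        · rintro rfl
          exact ⟨⟨col, rfl⟩, hv col⟩
      have hL : Nat.card {a : V //
            G'.Adj (Sum.inr (Sum.inr (Sum.inl m))) (Sum.inl a) ∧ c' (Sum.inl a) = col} = 1 := by
        have : Nat.card {a : V | (∃ i, a = v i) ∧ c a = col} = 1 := by
          rw [Nat.card_coe_set_eq, hset]
          exact Set.ncard_singleton _
        exact this
      rw [hL, hR]
    rw [key i, key j]
  · -- a vertex a'_m
    have key : ∀ col : Fin (2*k+1),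
        Nat.card {x // G'.Adj (Sum.inr (Sum.inr (Sum.inr m))) x ∧ c' x = col} = 1 := by
      intro col
      rw [card_subtype_sum]
      have hR : Nat.card {b : Unit ⊕ Fin (2*k) ⊕ Fin (2*k) //
            G'.Adj (Sum.inr (Sum.inr (Sum.inr m))) (Sum.inr b) ∧ c' (Sum.inr b) = col} = 0 :=
        nc_zero fun b hb => hb.1
      have hset : {a : V | (∃ i, a = v' i) ∧ c a = col} = {v' col} := by
        ext a
        constructor
        · rintro ⟨⟨i0, rfl⟩, hc⟩
          rw [hv' i0] at hc; rw [hc]; rfl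
        · rintro rfl
          exact ⟨⟨col, rfl⟩, hv' col⟩
      have hL : Nat.card {a : V //
            G'.Adj (Sum.inr (Sum.inr (Sum.inr m))) (Sum.inl a) ∧ c' (Sum.inl a) = col} = 1 := by
        have : Nat.card {a : V | (∃ i, a = v' i) ∧ c a = col} = 1 := by
          rw [Nat.card_coe_set_eq, hset]
          exact Set.ncard_singleton _
        exact this
      rw [hL, hR]
    rw [key i, key j]
end
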